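/- arXiv:1107.4373 — 3 statements merged into one kernel-verified Lean document; each statement's English description precedes it below -/
import Mathlib

section
/- If A and B are skew shapes with supp(A) = supp(B) and A is a ribbon, then B is also a ribbon. -/
/-- A skew shape `outer / inner`: the boxes of the Young diagram of `outer`
that are not boxes of the Young diagram of `inner`. -/
structure SkewShape where
  outer : YoungDiagram
  inner : YoungDiagram
  inner_le : inner ≤ outer

namespace SkewShape

/-- The set of boxes of a skew shape. -/
def cells (A : SkewShape) : Finset (ℕ × ℕ) := A.outer.cells \ A.inner.cells

/-- The size of a skew shape is its number of boxes. -/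
def size (A : SkewShape) : ℕ := A.cells.card

/-- The length of row `i` of a skew shape. -/
def rowLen (A : SkewShape) (i : ℕ) : ℕ := (A.cells.filter fun c => c.1 = i).card

/-- The length of column `j` of a skew shape. -/
def colLen (A : SkewShape) (j : ℕ) : ℕ := (A.cells.filter fun c => c.2 = j).card

/-- The set of indices of nonempty rows. -/
def rowSet (A : SkewShape) : Finset ℕ := A.cells.image Prod.fst

/-- The set of indices of nonempty columns. -/
def colSet (A : SkewShape) : Finset ℕ := A.cells.image Prod.snd

/-- The number of nonempty rows. -/
def numRows (A : SkewShape) : ℕ := A.rowSet.card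

/-- The number of nonempty columns. -/
def numCols (A : SkewShape) : ℕ := A.colSet.card

/-- `rows A`: the multiset of lengths of the nonempty rows of `A`
(equivalently, that sequence sorted into weakly decreasing order). -/
def rows (A : SkewShape) : Multiset ℕ := A.rowSet.val.map A.rowLen

/-- `cols A`: the multiset of lengths of the nonempty columns of `A`. -/
def cols (A : SkewShape) : Multiset ℕ := A.colSet.val.map A.colLen

/-- A skew shape is disconnected if its boxes can be split into two nonempty
parts such that no box of one part shares a row or a column with a box of the
other part. -/
def Disconnected (A : SkewShape) : Prop :=
  ∃ B C : Finset (ℕ × ℕ), B.Nonempty ∧ C.Nonempty ∧ B ∪ C = A.cells ∧ B ∩ C = ∅ ∧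
    ∀ b ∈ B, ∀ c ∈ C, b.1 ≠ c.1 ∧ b.2 ≠ c.2

/-- A skew shape is connected if it is nonempty and not disconnected. -/
def Connected (A : SkewShape) : Prop := A.cells.Nonempty ∧ ¬ A.Disconnected

/-- A ribbon is a connected skew shape containing no 2×2 block of boxes. -/
def Ribbon (A : SkewShape) : Prop :=
  A.Connected ∧ ∀ i j : ℕ, ¬ ((i, j) ∈ A.cells ∧ (i, j + 1) ∈ A.cells ∧
    (i + 1, j) ∈ A.cells ∧ (i + 1, j + 1) ∈ A.cells)

/-- The lengths of any two nonempty rows differ by at most one. -/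
def RowEquitable (A : SkewShape) : Prop :=
  ∀ i ∈ A.rowSet, ∀ i' ∈ A.rowSet, A.rowLen i ≤ A.rowLen i' + 1

/-- The lengths of any two nonempty columns differ by at most one. -/
def ColEquitable (A : SkewShape) : Prop :=
  ∀ j ∈ A.colSet, ∀ j' ∈ A.colSet, A.colLen j ≤ A.colLen j' + 1

/-- Equitable: both row equitable and column equitable. -/
def Equitable (A : SkewShape) : Prop := A.RowEquitable ∧ A.ColEquitable

/-- A filling of a skew shape is semistandard if its entries are positive
integers, weakly increasing along rows and strictly increasing down columns. -/
def IsSsyt (A : SkewShape) (T : ℕ × ℕ → ℕ) : Prop :=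
  (∀ c ∈ A.cells, 1 ≤ T c) ∧
  (∀ i j j', (i, j) ∈ A.cells → (i, j') ∈ A.cells → j ≤ j' → T (i, j) ≤ T (i, j')) ∧
  (∀ i i' j, (i, j) ∈ A.cells → (i', j) ∈ A.cells → i < i' → T (i, j) < T (i', j))

end SkewShape

/-- `c` comes weakly before `d` in the reverse reading order (right to left
along rows, rows top to bottom). -/
def ReadsBefore (c d : ℕ × ℕ) : Prop := c.1 < d.1 ∨ (c.1 = d.1 ∧ d.2 ≤ c.2)

instance : DecidableRel ReadsBefore := fun c d => by unfold ReadsBefore; infer_instance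

namespace SkewShape

/-- The number of boxes of `A` filled with the entry `k` by the filling `T`. -/
def content (A : SkewShape) (T : ℕ × ℕ → ℕ) (k : ℕ) : ℕ :=
  (A.cells.filter fun c => T c = k).card

/-- A Littlewood--Richardson filling: a semistandard filling such that every
prefix of the reverse reading word contains at least as many `k`'s as
`(k+1)`'s, for every positive `k`. -/
def IsLR (A : SkewShape) (T : ℕ × ℕ → ℕ) : Prop :=
  A.IsSsyt T ∧ ∀ d ∈ A.cells, ∀ k : ℕ,
    (A.cells.filter fun c => T c = k + 2 ∧ ReadsBefore c d).card ≤
    (A.cells.filter fun c => T c = k + 1 ∧ ReadsBefore c d).card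

end SkewShape

/-- The `i`-th largest part (0-indexed) of a multiset of natural numbers,
i.e. the `i`-th entry of the multiset sorted into weakly decreasing order. -/
def part (lam : Multiset ℕ) (i : ℕ) : ℕ := (lam.sort (· ≥ ·)).getD i 0

namespace SkewShape

/-- The support of a skew shape `A`: the set of partitions `lam` (multisets of
positive integers) for which there exists an LR filling of `A` of content `lam`. -/
def supp (A : SkewShape) : Set (Multiset ℕ) :=
  {lam | 0 ∉ lam ∧ ∃ T : ℕ × ℕ → ℕ, A.IsLR T ∧ ∀ i : ℕ, A.content T (i + 1) = part lam i}

/-- The set of LR fillings of `A` of content `lam` (normalized to vanish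
outside the boxes of `A`). -/
def LRset (A : SkewShape) (lam : Multiset ℕ) : Set ((ℕ × ℕ) → ℕ) :=
  {T | A.IsLR T ∧ (∀ c, c ∉ A.cells → T c = 0) ∧ ∀ i : ℕ, A.content T (i + 1) = part lam i}

/-- `s_A − s_B` is Schur-positive: for every partition, the number of LR
fillings of `B` of that content is at most the number for `A`. -/
def SchurPosDiff (A B : SkewShape) : Prop :=
  ∀ lam : Multiset ℕ, (B.LRset lam).ncard ≤ (A.LRset lam).ncard

end SkewShape

/-- The sum of the `k` largest parts of a multiset of natural numbers. -/
def psum (lam : Multiset ℕ) (k : ℕ) : ℕ := ((lam.sort (· ≥ ·)).take k).sum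

/-- Dominance order: `DomLe lam mu` means `lam ⊴ mu`, i.e. for every `k` the
sum of the `k` largest parts of `lam` is at most that of `mu`. -/
def DomLe (lam mu : Multiset ℕ) : Prop := ∀ k : ℕ, psum lam k ≤ psum mu k

/-- The conjugate (transpose) of a partition given as a multiset: its parts
are the numbers `#{x ∈ lam | x ≥ j}` for `j = 1, 2, …`. -/
def conj (lam : Multiset ℕ) : Multiset ℕ :=
  ((Finset.range lam.sum).val.map fun j => Multiset.card (lam.filter fun x => j + 1 ≤ x)).filter
    fun y => y ≠ 0

namespace SuppRibbonAux
open Finset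

variable {S : SkewShape}

lemma rb_refl (d : ℕ × ℕ) : ReadsBefore d d := Or.inr ⟨rfl, le_refl _⟩

lemma rb_trans {a b c : ℕ × ℕ} (h1 : ReadsBefore a b) (h2 : ReadsBefore b c) :
    ReadsBefore a c := by
  rcases h1 with h1 | ⟨h1, h1'⟩ <;> rcases h2 with h2 | ⟨h2, h2'⟩
  · exact Or.inl (h1.trans h2)
  · exact Or.inl (h2 ▸ h1)
  · exact Or.inl (h1 ▸ h2)
  · exact Or.inr ⟨h1.trans h2, h2'.trans h1'⟩

lemma cells_mem_iff {c : ℕ × ℕ} : c ∈ S.cells ↔ c ∈ S.outer ∧ c ∉ S.inner := by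
  simp [SkewShape.cells, YoungDiagram.mem_cells]

lemma row_contig {i j j' jm : ℕ} (h1 : (i, j) ∈ S.cells) (h2 : (i, j') ∈ S.cells)
    (hl : j ≤ jm) (hr : jm ≤ j') : (i, jm) ∈ S.cells := by
  rw [cells_mem_iff] at h1 h2 ⊢
  exact ⟨S.outer.up_left_mem le_rfl hr h2.1,
    fun hin => h1.2 (S.inner.up_left_mem le_rfl hl hin)⟩

lemma col_contig {i i' im j : ℕ} (h1 : (i, j) ∈ S.cells) (h2 : (i', j) ∈ S.cells)
    (hl : i ≤ im) (hr : im ≤ i') : (im, j) ∈ S.cells := by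
  rw [cells_mem_iff] at h1 h2 ⊢
  exact ⟨S.outer.up_left_mem hr le_rfl h2.1,
    fun hin => h1.2 (S.inner.up_left_mem hl le_rfl hin)⟩

lemma upright {i j : ℕ} (h1 : (i, j) ∈ S.cells) (h2 : (i + 1, j + 1) ∈ S.cells) :
    (i, j + 1) ∈ S.cells := by
  rw [cells_mem_iff] at h1 h2 ⊢
  exact ⟨S.outer.up_left_mem (Nat.le_succ i) le_rfl h2.1,
    fun hin => h1.2 (S.inner.up_left_mem le_rfl (Nat.le_succ j) hin)⟩

/-- Cells having a cell directly above them. -/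
def Dset (S : SkewShape) : Finset (ℕ × ℕ) :=
  S.cells.filter fun x => 0 < x.1 ∧ (x.1 - 1, x.2) ∈ S.cells

/-- Cells that are rightmost in their row, whose row is not the top row. -/
def Eset (S : SkewShape) : Finset (ℕ × ℕ) :=
  S.cells.filter fun x => (x.1, x.2 + 1) ∉ S.cells ∧ ∃ y ∈ S.cells, y.1 < x.1

def No2x2 (S : SkewShape) : Prop := ∀ i j : ℕ, ¬ ((i, j) ∈ S.cells ∧ (i, j + 1) ∈ S.cells ∧
    (i + 1, j) ∈ S.cells ∧ (i + 1, j + 1) ∈ S.cells)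

lemma Dset_subset_Eset (h2 : No2x2 S) : Dset S ⊆ Eset S := by
  rintro ⟨xi, xj⟩ hx
  simp only [Dset, mem_filter] at hx
  obtain ⟨hxc, hx1, hxa⟩ := hx
  obtain ⟨i, rfl⟩ : ∃ i, xi = i + 1 := ⟨xi - 1, by omega⟩
  simp only [Nat.add_sub_cancel] at hxa
  simp only [Eset, mem_filter]
  refine ⟨hxc, ?_, ⟨(i, xj), hxa, by omega⟩⟩
  intro hr
  exact h2 i xj ⟨hxa, upright hxa hr, hxc, hr⟩

lemma Eset_row_unique {x y : ℕ × ℕ} (hx : x ∈ Eset S) (hy : y ∈ Eset S) (hxy : x.1 = y.1) :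
    x = y := by
  obtain ⟨xi, xj⟩ := x; obtain ⟨yi, yj⟩ := y
  simp only at hxy
  subst hxy
  simp only [Eset, mem_filter] at hx hy
  rcases lt_trichotomy xj yj with hlt | heq | hgt
  · exact absurd (row_contig hx.1 hy.1 (Nat.le_succ xj) hlt) hx.2.1
  · rw [heq]
  · exact absurd (row_contig hy.1 hx.1 (Nat.le_succ yj) hgt) hy.2.1

lemma mem_rowSet_iff {i : ℕ} : i ∈ S.rowSet ↔ ∃ x ∈ S.cells, x.1 = i := by
  constructor
  · intro h; obtain ⟨x, hx, h2⟩ := Finset.mem_image.mp h; exact ⟨x, hx, h2⟩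
  · rintro ⟨x, hx, h2⟩; exact Finset.mem_image.mpr ⟨x, hx, h2⟩

lemma rowSet_nonempty (hne : S.cells.Nonempty) : S.rowSet.Nonempty := by
  obtain ⟨x, hx⟩ := hne
  exact ⟨x.1, mem_rowSet_iff.mpr ⟨x, hx, rfl⟩⟩

lemma Ecard_lt (hne : S.cells.Nonempty) : (Eset S).card < S.numRows := by
  have hrne := rowSet_nonempty hne
  set m := S.rowSet.min' hrne with hm
  have hle : (Eset S).card ≤ (S.rowSet.erase m).card := by
    apply Finset.card_le_card_of_injOn Prod.fst
    · intro x hx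
      have hx' := hx
      simp only [Eset, Finset.mem_coe, mem_filter] at hx'
      obtain ⟨hxc, _, y, hyc, hylt⟩ := hx'
      refine Finset.mem_erase.mpr ⟨?_, mem_rowSet_iff.mpr ⟨x, hxc, rfl⟩⟩
      have := S.rowSet.min'_le y.1 (mem_rowSet_iff.mpr ⟨y, hyc, rfl⟩)
      omega
    · intro x hx y hy hxy
      exact Eset_row_unique hx hy hxy
  have hmem : m ∈ S.rowSet := by rw [hm]; exact S.rowSet.min'_mem hrne
  have : (S.rowSet.erase m).card < S.rowSet.card := by
    have := Finset.card_erase_of_mem hmem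
    have hpos : 0 < S.rowSet.card := Finset.card_pos.mpr hrne
    omega
  exact lt_of_le_of_lt hle this


lemma partner {T : ℕ × ℕ → ℕ} (hLR : S.IsLR T) {d : ℕ × ℕ} (hd : d ∈ S.cells) {v : ℕ}
    (hv : T d = v + 2) : ∃ c ∈ S.cells, T c = v + 1 ∧ c.1 < d.1 := by
  have h := hLR.2 d hd v
  have hdm : d ∈ S.cells.filter fun c => T c = v + 2 ∧ ReadsBefore c d :=
    Finset.mem_filter.mpr ⟨hd, hv, rb_refl d⟩
  have hpos : 0 < (S.cells.filter fun c => T c = v + 1 ∧ ReadsBefore c d).card :=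
    lt_of_lt_of_le (Finset.card_pos.mpr ⟨d, hdm⟩) h
  obtain ⟨c, hc⟩ := Finset.card_pos.mp hpos
  simp only [Finset.mem_filter] at hc
  obtain ⟨hcc, hcv, hcrb⟩ := hc
  refine ⟨c, hcc, hcv, ?_⟩
  rcases hcrb with h1 | ⟨h1, h2⟩
  · exact h1
  · exfalso
    have hrow := hLR.1.2.1 d.1 d.2 c.2 (by simpa using hd) (by rw [← h1]; simpa using hcc) h2
    simp only [Prod.mk.eta] at hrow
    rw [← h1, Prod.mk.eta] at hrow
    omega

lemma chainset {T : ℕ × ℕ → ℕ} (hLR : S.IsLR T) :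
    ∀ v (d : ℕ × ℕ), d ∈ S.cells → T d = v + 1 →
      ∃ R : Finset ℕ, R ⊆ S.rowSet ∧ R.card = v + 1 ∧ ∀ i ∈ R, i ≤ d.1 := by
  intro v
  induction v with
  | zero =>
    intro d hd _
    refine ⟨{d.1}, ?_, by simp, by simp⟩
    simp only [Finset.singleton_subset_iff]
    exact mem_rowSet_iff.mpr ⟨d, hd, rfl⟩
  | succ v ih =>
    intro d hd hv
    obtain ⟨c, hc, hcv, hclt⟩ := partner hLR hd (v := v) (by omega)
    obtain ⟨R, hR1, hR2, hR3⟩ := ih c hc hcv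
    have hdR : d.1 ∉ R := fun hmem => by have := hR3 d.1 hmem; omega
    refine ⟨insert d.1 R, ?_, ?_, ?_⟩
    · intro i hi
      rcases Finset.mem_insert.mp hi with rfl | hi
      · exact mem_rowSet_iff.mpr ⟨d, hd, rfl⟩
      · exact hR1 hi
    · rw [Finset.card_insert_of_notMem hdR, hR2]
    · intro i hi
      rcases Finset.mem_insert.mp hi with rfl | hi
      · exact le_rfl
      · exact (hR3 i hi).trans (le_of_lt hclt)

lemma chainrow {T : ℕ × ℕ → ℕ} (hLR : S.IsLR T) {w : ℕ} (hw : 1 ≤ w) :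
    ∀ n (d : ℕ × ℕ), d ∈ S.cells → T d = w + n + 1 → ∃ y ∈ S.cells, T y = w ∧ y.1 < d.1 := by
  intro n
  induction n with
  | zero =>
    intro d hd hv
    obtain ⟨c, hc, hcv, hlt⟩ := partner hLR hd (v := w - 1) (by omega)
    exact ⟨c, hc, by omega, hlt⟩
  | succ n ih =>
    intro d hd hv
    obtain ⟨c, hc, hcv, hlt⟩ := partner hLR hd (v := w + n) (by omega)
    obtain ⟨y, hy, hyv, hylt⟩ := ih c hc (by omega)
    exact ⟨y, hy, hyv, hylt.trans hlt⟩

lemma ones_le {T : ℕ × ℕ → ℕ} (hLR : S.IsLR T) : S.content T 1 ≤ S.numCols := by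
  apply Finset.card_le_card_of_injOn Prod.snd
  · intro x hx
    exact Finset.mem_image_of_mem _ ((Finset.filter_subset _ _) hx)
  · intro x hx y hy hxy
    simp only [Finset.coe_filter, Set.mem_setOf_eq] at hx hy
    obtain ⟨hxc, hxv⟩ := hx
    obtain ⟨hyc, hyv⟩ := hy
    rcases lt_trichotomy x.1 y.1 with hlt | heq | hgt
    · exfalso
      have := hLR.1.2.2 x.1 y.1 x.2 (by simpa using hxc)
        (by rw [hxy, Prod.mk.eta]; exact hyc) hlt
      rw [Prod.mk.eta] at this
      rw [hxy, Prod.mk.eta] at this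
      omega
    · exact Prod.ext heq hxy
    · exfalso
      have := hLR.1.2.2 y.1 x.1 y.2 (by simpa using hyc)
        (by rw [← hxy, Prod.mk.eta]; exact hxc) hgt
      rw [Prod.mk.eta] at this
      rw [← hxy, Prod.mk.eta] at this
      omega

lemma no2x2_of_bounded {T : ℕ × ℕ → ℕ} (hLR : S.IsLR T)
    (hb : ∀ k, 2 ≤ k → S.content T k ≤ 1) : No2x2 S := by
  rintro i j ⟨h00, h01, h10, h11⟩
  have hb2 : 2 ≤ T (i + 1, j) := by
    have h1 := hLR.1.1 (i, j) h00
    have h2 := hLR.1.2.2 i (i + 1) j h00 h10 (Nat.lt_succ_self i)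
    omega
  have hbd : T (i + 1, j) ≤ T (i + 1, j + 1) := hLR.1.2.1 (i + 1) j (j + 1) h10 h11 (Nat.le_succ j)
  have key : ∃ y ∈ S.cells, T y = T (i + 1, j) ∧ y ≠ (i + 1, j) := by
    rcases eq_or_lt_of_le hbd with heq | hlt
    · exact ⟨(i + 1, j + 1), h11, heq.symm, by simp⟩
    · obtain ⟨y, hy, hyv, hylt⟩ := chainrow hLR (by omega : 1 ≤ T (i + 1, j))
        (T (i + 1, j + 1) - T (i + 1, j) - 1) (i + 1, j + 1) h11 (by omega)
      refine ⟨y, hy, hyv, fun hcon => ?_⟩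
      rw [hcon] at hylt
      simp at hylt
  obtain ⟨y, hy, hyv, hyne⟩ := key
  have h2c : 2 ≤ S.content T (T (i + 1, j)) := by
    have hsub : ({y, (i + 1, j)} : Finset (ℕ × ℕ)) ⊆
        S.cells.filter fun c => T c = T (i + 1, j) := by
      intro z hz
      rcases Finset.mem_insert.mp hz with rfl | hz
      · exact Finset.mem_filter.mpr ⟨hy, hyv⟩
      · rw [Finset.mem_singleton.mp hz]
        exact Finset.mem_filter.mpr ⟨h10, rfl⟩
    calc 2 = ({y, (i + 1, j)} : Finset (ℕ × ℕ)).card := (Finset.card_pair hyne).symm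
    _ ≤ _ := Finset.card_le_card hsub
  have := hb _ hb2
  omega

lemma replicate_sorted (p : ℕ) : List.Pairwise (· ≥ ·) (List.replicate p (1 : ℕ)) := by
  induction p with
  | zero => simp
  | succ p ih =>
    rw [List.replicate_succ, List.pairwise_cons]
    exact ⟨fun b hb => by rw [List.eq_of_mem_replicate hb], ih⟩

lemma hook_sort {a p : ℕ} (ha : 1 ≤ a) :
    Multiset.sort (a ::ₘ Multiset.replicate p 1) (· ≥ ·) = a :: List.replicate p 1 := by
  haveI : IsAntisymm ℕ (· ≥ ·) := ⟨fun a b h1 h2 => le_antisymm h2 h1⟩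
  refine (fun hp h1 h2 => List.Perm.eq_of_pairwise' (r := (· ≥ ·)) h1 h2 hp) ?_ ?_ ?_
  · rw [← Multiset.coe_eq_coe, Multiset.sort_eq]
    rw [← Multiset.cons_coe, Multiset.coe_replicate]
  · exact Multiset.pairwise_sort _ _
  · rw [List.pairwise_cons]
    exact ⟨fun b hb => by rw [List.eq_of_mem_replicate hb]; exact ha, replicate_sorted p⟩

lemma getD_replicate {p i : ℕ} : (List.replicate p (1 : ℕ)).getD i 0 = if i < p then 1 else 0 := by
  induction p generalizing i with
  | zero => simp
  | succ p ih =>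
    rw [List.replicate_succ]
    cases i with
    | zero => simp
    | succ i => simpa using ih

lemma hook_part0 {a p : ℕ} (ha : 1 ≤ a) : part (a ::ₘ Multiset.replicate p 1) 0 = a := by
  simp [part, hook_sort ha]

lemma hook_part_succ {a p i : ℕ} (ha : 1 ≤ a) :
    part (a ::ₘ Multiset.replicate p 1) (i + 1) = if i < p then 1 else 0 := by
  rw [part, hook_sort ha, List.getD_cons_succ, getD_replicate]

lemma list_sum_getD (l : List ℕ) : ∑ i ∈ Finset.range l.length, l.getD i 0 = l.sum := by
  induction l with
  | nil => simp
  | cons a l ih =>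
    rw [List.length_cons, Finset.sum_range_succ']
    simp only [List.getD_cons_succ, List.getD_cons_zero, ih, List.sum_cons]
    omega

lemma sum_of_mem_supp {lam : Multiset ℕ} (hl : lam ∈ S.supp) : lam.sum = S.size := by
  obtain ⟨h0, T, hLR, hcont⟩ := hl
  set m := Multiset.card lam with hm
  have hlen : (Multiset.sort lam (· ≥ ·)).length = m := Multiset.length_sort _
  have hmem : ∀ c ∈ S.cells, T c ∈ Finset.Icc 1 m := by
    intro c hc
    refine Finset.mem_Icc.mpr ⟨hLR.1.1 c hc, ?_⟩
    by_contra hgt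
    push_neg at hgt
    have h1 : S.content T (T c) = part lam (T c - 1) := by
      have := hcont (T c - 1)
      have hTc := hLR.1.1 c hc
      rwa [Nat.sub_add_cancel hTc] at this
    have hpos : 0 < S.content T (T c) :=
      Finset.card_pos.mpr ⟨c, Finset.mem_filter.mpr ⟨hc, rfl⟩⟩
    have hz : part lam (T c - 1) = 0 := by
      apply List.getD_eq_default
      omega
    omega
  have hsize : S.size = ∑ k ∈ Finset.Icc 1 m, S.content T k :=
    Finset.card_eq_sum_card_fiberwise hmem
  have h2 : ∑ k ∈ Finset.Icc 1 m, S.content T k = ∑ i ∈ Finset.range m, S.content T (1 + i) := by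
    rw [← Finset.Ico_add_one_right_eq_Icc, Finset.sum_Ico_eq_sum_range]
    simp
  have h3 : ∑ i ∈ Finset.range m, S.content T (1 + i) = ∑ i ∈ Finset.range m, part lam i := by
    apply Finset.sum_congr rfl
    intro i _
    rw [Nat.add_comm 1 i]
    exact hcont i
  have h4 : ∑ i ∈ Finset.range m, part lam i = lam.sum := by
    simp only [part]
    rw [← hlen, list_sum_getD]
    rw [← Multiset.sum_coe, Multiset.sort_eq]
  omega

lemma Dset_col_card {j : ℕ} (hj : j ∈ S.colSet) :
    (S.cells.filter fun x => x.2 = j).card = ((Dset S).filter fun x => x.2 = j).card + 1 := by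
  classical
  set Cj := S.cells.filter fun x => x.2 = j with hCj
  have hCne : Cj.Nonempty := by
    obtain ⟨x, hx, hxj⟩ := Finset.mem_image.mp hj
    exact ⟨x, Finset.mem_filter.mpr ⟨hx, hxj⟩⟩
  have hRne : (Cj.image Prod.fst).Nonempty := hCne.image _
  set tj := (Cj.image Prod.fst).min' hRne with htj
  have htmem : (tj, j) ∈ S.cells := by
    have h1 := (Cj.image Prod.fst).min'_mem hRne
    rw [← htj] at h1
    obtain ⟨x, hx, hx1⟩ := Finset.mem_image.mp h1
    have h2 := Finset.mem_filter.mp hx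
    have hxe : x = (tj, j) := Prod.ext hx1 h2.2
    rw [← hxe]; exact h2.1
  have htle : ∀ x ∈ Cj, tj ≤ x.1 := fun x hx =>
    (Cj.image Prod.fst).min'_le x.1 (Finset.mem_image_of_mem _ hx)
  have htCj : (tj, j) ∈ Cj := Finset.mem_filter.mpr ⟨htmem, rfl⟩
  have hkey : (Dset S).filter (fun x => x.2 = j) = Cj.erase (tj, j) := by
    ext z
    simp only [Dset, Finset.mem_filter, Finset.mem_erase, hCj]
    constructor
    · rintro ⟨⟨hzc, hz1, hza⟩, hzj⟩
      refine ⟨?_, hzc, hzj⟩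
      intro hze
      rw [hze] at hza hz1
      simp only at hza hz1
      have hmem2 : (tj - 1, j) ∈ Cj := Finset.mem_filter.mpr ⟨hza, rfl⟩
      have := htle _ hmem2
      simp only at this
      omega
    · rintro ⟨hzne, hzc, hzj⟩
      have hzCj : z ∈ Cj := Finset.mem_filter.mpr ⟨hzc, hzj⟩
      have htlz := htle z hzCj
      have hz1 : tj < z.1 := by
        rcases eq_or_lt_of_le htlz with heq | hlt
        · exfalso; apply hzne
          rw [← Prod.mk.eta (p := z), hzj, ← heq]
        · exact hlt
      refine ⟨⟨hzc, by omega, ?_⟩, hzj⟩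
      have hcol : (z.1 - 1, j) ∈ S.cells := col_contig htmem
        (by rw [← hzj, Prod.mk.eta]; exact hzc) (by omega) (by omega)
      rwa [hzj]
  have hcard : 0 < Cj.card := Finset.card_pos.mpr hCne
  rw [hkey, Finset.card_erase_of_mem htCj]
  omega

lemma size_eq_cols_add_D (S : SkewShape) : S.size = S.numCols + (Dset S).card := by
  classical
  have h1 : S.size = ∑ j ∈ S.colSet, (S.cells.filter fun x => x.2 = j).card :=
    Finset.card_eq_sum_card_fiberwise (fun x hx => Finset.mem_image_of_mem _ hx)
  have h2 : (Dset S).card = ∑ j ∈ S.colSet, ((Dset S).filter fun x => x.2 = j).card :=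
    Finset.card_eq_sum_card_fiberwise
      (fun x hx => Finset.mem_image_of_mem _ ((Finset.filter_subset _ _) hx))
  rw [h1, h2]
  rw [Finset.sum_congr rfl (fun j hj => Dset_col_card hj)]
  rw [Finset.sum_add_distrib, Finset.sum_const, smul_eq_mul, mul_one]
  rw [SkewShape.numCols]
  omega

lemma conn_row_has_D (hcon : S.Connected) {i : ℕ} (hi : i ∈ S.rowSet)
    (hne : ∃ y ∈ S.cells, y.1 < i) : ∃ x ∈ Dset S, x.1 = i := by
  classical
  by_contra hno
  push_neg at hno
  apply hcon.2
  refine ⟨S.cells.filter (fun x => x.1 < i), S.cells.filter (fun x => ¬ x.1 < i), ?_, ?_, ?_, ?_, ?_⟩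
  · obtain ⟨y, hy, hyl⟩ := hne
    exact ⟨y, Finset.mem_filter.mpr ⟨hy, hyl⟩⟩
  · obtain ⟨x, hx, hxi⟩ := mem_rowSet_iff.mp hi
    exact ⟨x, Finset.mem_filter.mpr ⟨hx, by omega⟩⟩
  · exact Finset.filter_union_filter_not_eq _ _
  · ext z
    simp only [Finset.mem_inter, Finset.mem_filter, Finset.notMem_empty, iff_false]
    tauto
  · intro b hb c hc
    rw [Finset.mem_filter] at hb hc
    obtain ⟨hbc, hbl⟩ := hb
    obtain ⟨hcc, hcl⟩ := hc
    refine ⟨by omega, ?_⟩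
    intro hbc2
    have hm1 : (i, b.2) ∈ S.cells := col_contig (by rw [Prod.mk.eta]; exact hbc)
      (by rw [hbc2, Prod.mk.eta]; exact hcc) (by omega) (by omega)
    have hm2 : (i - 1, b.2) ∈ S.cells := col_contig (by rw [Prod.mk.eta]; exact hbc)
      (by rw [hbc2, Prod.mk.eta]; exact hcc) (by omega) (by omega)
    have : (i, b.2) ∈ Dset S := by
      simp only [Dset, Finset.mem_filter]
      exact ⟨hm1, by omega, by simpa using hm2⟩
    exact hno _ this rfl

lemma card_D_of_connected (hcon : S.Connected) (h2 : No2x2 S) :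
    S.numRows = (Dset S).card + 1 := by
  classical
  have hne : S.cells.Nonempty := hcon.1
  have hrne := rowSet_nonempty hne
  set m := S.rowSet.min' hrne with hm
  have hmmem : m ∈ S.rowSet := by rw [hm]; exact S.rowSet.min'_mem hrne
  have hbij : (Dset S).card = (S.rowSet.erase m).card := by
    apply Finset.card_bij (fun x _ => x.1)
    · intro x hx
      have hx' := hx
      simp only [Dset, Finset.mem_filter] at hx'
      obtain ⟨hxc, hx1, hxa⟩ := hx'
      refine Finset.mem_erase.mpr ⟨?_, mem_rowSet_iff.mpr ⟨x, hxc, rfl⟩⟩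
      have : x.1 - 1 ∈ S.rowSet := mem_rowSet_iff.mpr ⟨_, hxa, rfl⟩
      have := S.rowSet.min'_le _ this
      omega
    · intro x hx y hy hxy
      exact Eset_row_unique (Dset_subset_Eset h2 hx) (Dset_subset_Eset h2 hy) hxy
    · intro i hi
      rw [Finset.mem_erase] at hi
      obtain ⟨hine, hirow⟩ := hi
      have hlt : m < i := by
        have := S.rowSet.min'_le i hirow
        omega
      obtain ⟨y, hy, hyl⟩ := mem_rowSet_iff.mp hmmem
      obtain ⟨x, hx, hxi⟩ := conn_row_has_D hcon hirow ⟨y, hy, by omega⟩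
      exact ⟨x, hx, hxi⟩
  have : m ∈ S.rowSet := hmmem
  rw [SkewShape.numRows, hbij, Finset.card_erase_of_mem hmmem]
  have : 0 < S.rowSet.card := Finset.card_pos.mpr hrne
  omega

lemma row_has_E (hne : S.cells.Nonempty) {i : ℕ} (hi : i ∈ S.rowSet)
    (hnt : ∃ y ∈ S.cells, y.1 < i) : ∃ g ∈ Eset S, g.1 = i := by
  classical
  set Ri := S.cells.filter fun x => x.1 = i with hRi
  have hRne : Ri.Nonempty := by
    obtain ⟨x, hx, hxi⟩ := mem_rowSet_iff.mp hi
    exact ⟨x, Finset.mem_filter.mpr ⟨hx, hxi⟩⟩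
  have hJne : (Ri.image Prod.snd).Nonempty := hRne.image _
  set jm := (Ri.image Prod.snd).max' hJne with hjm
  have hgmem : (i, jm) ∈ S.cells := by
    have h1 := (Ri.image Prod.snd).max'_mem hJne
    rw [← hjm] at h1
    obtain ⟨x, hx, hx2⟩ := Finset.mem_image.mp h1
    have h2 := Finset.mem_filter.mp hx
    have : x = (i, jm) := Prod.ext h2.2 hx2
    rw [← this]; exact h2.1
  refine ⟨(i, jm), ?_, rfl⟩
  simp only [Eset, Finset.mem_filter]
  refine ⟨hgmem, ?_, ?_⟩
  · intro hcon
    have : (i, jm + 1) ∈ Ri := Finset.mem_filter.mpr ⟨hcon, rfl⟩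
    have := (Ri.image Prod.snd).le_max' (jm + 1) (Finset.mem_image_of_mem _ this)
    omega
  · obtain ⟨y, hy, hyl⟩ := hnt
    exact ⟨y, hy, by simpa using hyl⟩

lemma connected_of (hne : S.cells.Nonempty) (hED : Eset S ⊆ Dset S) : S.Connected := by
  classical
  refine ⟨hne, ?_⟩
  rintro ⟨P, Q, hPne, hQne, hunion, hinter, hsep⟩
  have hrne := rowSet_nonempty hne
  set m := S.rowSet.min' hrne with hm
  have hmmem : m ∈ S.rowSet := by rw [hm]; exact S.rowSet.min'_mem hrne
  obtain ⟨x0, hx0, hx0m⟩ := mem_rowSet_iff.mp hmmem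
  have hcells : ∀ x ∈ S.cells, x ∈ P ∨ x ∈ Q := by
    intro x hx
    rw [← hunion] at hx
    exact Finset.mem_union.mp hx
  have hsame : ∀ x ∈ S.cells, ∀ y ∈ S.cells, (x.1 = y.1 ∨ x.2 = y.2) → (x ∈ P ↔ y ∈ P) := by
    have haux : ∀ x ∈ S.cells, ∀ y ∈ S.cells, (x.1 = y.1 ∨ x.2 = y.2) → x ∈ P → y ∈ P := by
      intro x hx y hy hor hxP
      rcases hcells y hy with h | h
      · exact h
      · exfalso
        have := hsep x hxP y h
        tauto
    intro x hx y hy hor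
    exact ⟨haux x hx y hy hor, haux y hy x hx (by tauto)⟩
  have hmain : ∀ i, ∀ x ∈ S.cells, x.1 = i → (x ∈ P ↔ x0 ∈ P) := by
    intro i
    induction i using Nat.strong_induction_on with
    | _ i ih =>
      intro x hx hxi
      by_cases him : i = m
      · exact hsame x hx x0 hx0 (Or.inl (by omega))
      · have hirow : i ∈ S.rowSet := mem_rowSet_iff.mpr ⟨x, hx, hxi⟩
        have hmlt : m < i := by
          have := S.rowSet.min'_le i hirow
          omega
        obtain ⟨g, hgE, hgi⟩ := row_has_E hne hirow ⟨x0, hx0, by omega⟩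
        have hgD := hED hgE
        simp only [Dset, Finset.mem_filter] at hgD
        obtain ⟨hgc, hg1, hga⟩ := hgD
        have step1 : x ∈ P ↔ g ∈ P := hsame x hx g hgc (Or.inl (by omega))
        have step2 : g ∈ P ↔ (g.1 - 1, g.2) ∈ P := hsame g hgc _ hga (Or.inr rfl)
        have step3 : (g.1 - 1, g.2) ∈ P ↔ x0 ∈ P := ih (g.1 - 1) (by omega) _ hga rfl
        rw [step1, step2, step3]
  obtain ⟨p0, hp0⟩ := hPne
  obtain ⟨q0, hq0⟩ := hQne
  have hp0c : p0 ∈ S.cells := by rw [← hunion]; exact Finset.mem_union_left _ hp0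
  have hq0c : q0 ∈ S.cells := by rw [← hunion]; exact Finset.mem_union_right _ hq0
  have h1 : x0 ∈ P := (hmain p0.1 p0 hp0c rfl).mp hp0
  have h2 : q0 ∈ P := (hmain q0.1 q0 hq0c rfl).mpr h1
  have : q0 ∈ P ∩ Q := Finset.mem_inter.mpr ⟨h2, hq0⟩
  rw [hinter] at this
  exact Finset.notMem_empty _ this

lemma construct (S : SkewShape) (hne : S.cells.Nonempty) (h2 : No2x2 S)
    (V : Finset (ℕ × ℕ)) (hDV : Dset S ⊆ V) (hVE : V ⊆ Eset S) :
    ((S.size - V.card) ::ₘ Multiset.replicate V.card 1) ∈ S.supp := by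
  classical
  have hVC : V ⊆ S.cells := fun x hx => (Finset.filter_subset _ _) (hVE hx)
  set p := V.card with hp
  have hpn : p < S.size := by
    have h1 : p ≤ (Eset S).card := Finset.card_le_card hVE
    have h2' : (Eset S).card < S.numRows := Ecard_lt hne
    have h3 : S.numRows ≤ S.size := Finset.card_image_le
    omega
  have ha : 1 ≤ S.size - p := by omega
  set f : ℕ × ℕ → ℕ := fun x => 1 + (V.filter fun y => y.1 ≤ x.1).card with hf
  have hrowu : ∀ x ∈ V, ∀ y ∈ V, x.1 = y.1 → x = y := fun x hx y hy hh =>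
    Eset_row_unique (hVE hx) (hVE hy) hh
  have hf2 : ∀ x ∈ V, 2 ≤ f x := by
    intro x hx
    have h1 : x ∈ V.filter fun y => y.1 ≤ x.1 := Finset.mem_filter.mpr ⟨hx, le_rfl⟩
    have h2'' := Finset.card_pos.mpr ⟨x, h1⟩
    simp only [hf]
    omega
  have hfp : ∀ x ∈ V, f x ≤ p + 1 := by
    intro x hx
    have := Finset.card_le_card (Finset.filter_subset (fun y => y.1 ≤ x.1) V)
    simp only [hf]
    omega
  have hfmono : ∀ x ∈ V, ∀ y ∈ V, x.1 < y.1 → f x < f y := by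
    intro x hx y hy hlt
    have hss : (V.filter fun z => z.1 ≤ x.1) ⊂ V.filter fun z => z.1 ≤ y.1 := by
      rw [Finset.ssubset_iff_of_subset]
      · exact ⟨y, Finset.mem_filter.mpr ⟨hy, le_rfl⟩,
          fun hc => by have := (Finset.mem_filter.mp hc).2; omega⟩
      · intro z hz
        have := Finset.mem_filter.mp hz
        exact Finset.mem_filter.mpr ⟨this.1, this.2.trans hlt.le⟩
    have := Finset.card_lt_card hss
    simp only [hf]
    omega
  have hfinj : ∀ x ∈ V, ∀ y ∈ V, f x = f y → x = y := by
    intro x hx y hy hfe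
    rcases lt_trichotomy x.1 y.1 with hlt | heq | hgt
    · exact absurd hfe (Nat.ne_of_lt (hfmono x hx y hy hlt))
    · exact hrowu x hx y hy heq
    · exact absurd hfe.symm (Nat.ne_of_lt (hfmono y hy x hx hgt))
  have hsurj : ∀ k, 2 ≤ k → k ≤ p + 1 → ∃ x ∈ V, f x = k := by
    intro k hk2 hkp
    have hcard : (Finset.Icc 2 (p + 1)).card ≤ V.card := by
      rw [Nat.card_Icc]
      omega
    obtain ⟨x, hx, hfx⟩ := Finset.surj_on_of_inj_on_of_card_le (s := V)
      (t := Finset.Icc 2 (p + 1)) (fun x _ => f x)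
      (fun x hx => Finset.mem_Icc.mpr ⟨hf2 x hx, hfp x hx⟩)
      (fun x y hx hy hh => hfinj x hx y hy hh) hcard k (Finset.mem_Icc.mpr ⟨hk2, hkp⟩)
    exact ⟨x, hx, hfx.symm⟩
  set T : ℕ × ℕ → ℕ := fun x => if x ∈ V then f x else 1 with hT
  have hT1 : ∀ x, x ∉ V → T x = 1 := fun x hx => by simp only [hT, if_neg hx]
  have hTV : ∀ x ∈ V, T x = f x := fun x hx => by simp only [hT, if_pos hx]
  have hTval : ∀ c ∈ S.cells, ∀ m, 2 ≤ m → T c = m → c ∈ V ∧ f c = m := by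
    intro c _ m hm hTc
    by_cases hc : c ∈ V
    · exact ⟨hc, by rw [← hTV c hc]; exact hTc⟩
    · rw [hT1 c hc] at hTc
      omega
  -- SSYT
  have hpos : ∀ c ∈ S.cells, 1 ≤ T c := by
    intro c _
    by_cases hc : c ∈ V
    · rw [hTV c hc]; have := hf2 c hc; omega
    · rw [hT1 c hc]
  have hrow : ∀ i j j', (i, j) ∈ S.cells → (i, j') ∈ S.cells → j ≤ j' →
      T (i, j) ≤ T (i, j') := by
    intro i j j' hj hj' hle
    by_cases hc : (i, j) ∈ V
    · rcases eq_or_lt_of_le hle with rfl | hlt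
      · exact le_rfl
      · exfalso
        have hE := hVE hc
        simp only [Eset, Finset.mem_filter] at hE
        exact hE.2.1 (row_contig hj hj' (Nat.le_succ j) hlt)
    · rw [hT1 _ hc]
      exact hpos _ hj'
  have hcol : ∀ i i' j, (i, j) ∈ S.cells → (i', j) ∈ S.cells → i < i' →
      T (i, j) < T (i', j) := by
    intro i i' j hi hi' hlt
    have hD : (i', j) ∈ Dset S := by
      simp only [Dset, Finset.mem_filter]
      exact ⟨hi', by omega, col_contig hi hi' (by omega) (by omega)⟩
    have hV : (i', j) ∈ V := hDV hD
    rw [hTV _ hV]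
    by_cases hc : (i, j) ∈ V
    · rw [hTV _ hc]
      exact hfmono _ hc _ hV (by simpa using hlt)
    · rw [hT1 _ hc]
      have := hf2 _ hV
      omega
  -- lattice
  have hlattice : ∀ d ∈ S.cells, ∀ k : ℕ,
      (S.cells.filter fun c => T c = k + 2 ∧ ReadsBefore c d).card ≤
      (S.cells.filter fun c => T c = k + 1 ∧ ReadsBefore c d).card := by
    intro d hd k
    by_cases hLne : (S.cells.filter fun c => T c = k + 2 ∧ ReadsBefore c d).Nonempty
    · obtain ⟨x, hx⟩ := hLne
      rw [Finset.mem_filter] at hx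
      obtain ⟨hxc, hxv, hxrb⟩ := hx
      obtain ⟨hxV, hxf⟩ := hTval x hxc (k + 2) (by omega) hxv
      have hcard1 : (S.cells.filter fun c => T c = k + 2 ∧ ReadsBefore c d).card ≤ 1 := by
        rw [Finset.card_le_one]
        intro z hz w hw
        rw [Finset.mem_filter] at hz hw
        obtain ⟨hzV, hzf⟩ := hTval z hz.1 (k + 2) (by omega) hz.2.1
        obtain ⟨hwV, hwf⟩ := hTval w hw.1 (k + 2) (by omega) hw.2.1
        exact hfinj z hzV w hwV (by omega)
      have hcard2 : 1 ≤ (S.cells.filter fun c => T c = k + 1 ∧ ReadsBefore c d).card := by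
        rcases Nat.eq_zero_or_pos k with rfl | hk
        · -- value 2; find a 1 in an earlier row
          have hE := hVE hxV
          simp only [Eset, Finset.mem_filter] at hE
          obtain ⟨y, hyc, hyl⟩ := hE.2.2
          have hyV : y ∉ V := by
            intro hyV
            have := hfmono y hyV x hxV hyl
            have := hf2 y hyV
            omega
          apply Finset.card_pos.mpr
          refine ⟨y, Finset.mem_filter.mpr ⟨hyc, hT1 y hyV, ?_⟩⟩
          exact rb_trans (Or.inl hyl) hxrb
        · -- value k+2 ≥ 3; find the V-cell with value k+1
          obtain ⟨y, hyV, hyf⟩ := hsurj (k + 1) (by omega) (by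
            have := hfp x hxV
            omega)
          have hylt : y.1 < x.1 := by
            rcases lt_trichotomy y.1 x.1 with hh | hh | hh
            · exact hh
            · exfalso
              have := hrowu y hyV x hxV hh
              rw [this] at hyf
              omega
            · exfalso
              have := hfmono x hxV y hyV hh
              omega
          apply Finset.card_pos.mpr
          refine ⟨y, Finset.mem_filter.mpr ⟨hVC hyV, by rw [hTV y hyV]; omega, ?_⟩⟩
          exact rb_trans (Or.inl hylt) hxrb
      omega
    · rw [Finset.not_nonempty_iff_eq_empty] at hLne
      rw [hLne]
      simp
  -- content
  have hcontent1 : S.content T 1 = S.size - p := by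
    have : S.cells.filter (fun c => T c = 1) = S.cells \ V := by
      ext z
      simp only [Finset.mem_filter, Finset.mem_sdiff]
      constructor
      · rintro ⟨hzc, hzv⟩
        refine ⟨hzc, fun hzV => ?_⟩
        rw [hTV z hzV] at hzv
        have := hf2 z hzV
        omega
      · rintro ⟨hzc, hzV⟩
        exact ⟨hzc, hT1 z hzV⟩
    rw [SkewShape.content, this, Finset.card_sdiff_of_subset hVC]
    rfl
  have hcontent2 : ∀ i : ℕ, S.content T (i + 2) = if i < p then 1 else 0 := by
    intro i
    have hfe : S.cells.filter (fun c => T c = i + 2) = V.filter (fun c => f c = i + 2) := by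
      ext z
      simp only [Finset.mem_filter]
      constructor
      · rintro ⟨hzc, hzv⟩
        exact (hTval z hzc (i + 2) (by omega) hzv).imp id (fun h => h)
      · rintro ⟨hzV, hzf⟩
        exact ⟨hVC hzV, by rw [hTV z hzV]; exact hzf⟩
    rw [SkewShape.content, hfe]
    by_cases hip : i < p
    · obtain ⟨x, hxV, hxf⟩ := hsurj (i + 2) (by omega) (by omega)
      rw [if_pos hip, Finset.card_eq_one]
      refine ⟨x, ?_⟩
      ext z
      simp only [Finset.mem_filter, Finset.mem_singleton]
      constructor
      · rintro ⟨hzV, hzf⟩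
        exact hfinj z hzV x hxV (by omega)
      · rintro rfl
        exact ⟨hxV, hxf⟩
    · rw [if_neg hip]
      rw [Finset.card_eq_zero]
      ext z
      simp only [Finset.mem_filter, Finset.notMem_empty, iff_false, not_and]
      intro hzV hzf
      have := hfp z hzV
      omega
  refine ⟨?_, T, ⟨⟨hpos, hrow, hcol⟩, hlattice⟩, ?_⟩
  · simp only [Multiset.mem_cons, Multiset.mem_replicate]
    push_neg
    exact ⟨by omega, fun _ => by omega⟩
  · intro i
    cases i with
    | zero => rw [hook_part0 ha]; exact hcontent1
    | succ i =>
      rw [hook_part_succ ha]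
      exact hcontent2 i

lemma rigid (S : SkewShape) (hcon : S.Connected) (h2 : No2x2 S) {a t : ℕ} (ha : 1 ≤ a)
    (hmem : (a ::ₘ Multiset.replicate t 1) ∈ S.supp) :
    a = S.numCols ∧ t + 1 = S.numRows := by
  obtain ⟨h0, T, hLR, hcont⟩ := hmem
  have hsum : a + t = S.size := by
    have := sum_of_mem_supp (S := S) ⟨h0, T, hLR, hcont⟩
    simpa [Multiset.sum_cons, Multiset.sum_replicate] using this
  have hsize : S.size = S.numCols + (Dset S).card := size_eq_cols_add_D S
  have hDr : S.numRows = (Dset S).card + 1 := card_D_of_connected hcon h2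
  have hones : a ≤ S.numCols := by
    have h1 : S.content T 1 = a := by
      have := hcont 0
      rwa [hook_part0 ha] at this
    have := ones_le hLR
    omega
  have htr : t + 1 ≤ S.numRows := by
    rcases Nat.eq_zero_or_pos t with rfl | ht
    · have : 0 < S.numRows := Finset.card_pos.mpr (rowSet_nonempty hcon.1)
      omega
    · have h1 : S.content T (t + 1) = 1 := by
        obtain ⟨t', rfl⟩ : ∃ t', t = t' + 1 := ⟨t - 1, by omega⟩
        have := hcont (t' + 1)
        rwa [hook_part_succ ha, if_pos (by omega)] at this
      rw [SkewShape.content] at h1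
      have hpos : 0 < (S.cells.filter fun c => T c = t + 1).card := by omega
      obtain ⟨d, hd⟩ := Finset.card_pos.mp hpos
      rw [Finset.mem_filter] at hd
      obtain ⟨R, hR1, hR2, _⟩ := chainset hLR t d hd.1 hd.2
      have := Finset.card_le_card hR1
      rw [hR2] at this
      exact this
  omega

end SuppRibbonAux


/-- If `A` and `B` are skew shapes with `supp A = supp B` and `A` is
a ribbon, then `B` is also a ribbon. -/
theorem supp_eq_ribbon (A B : SkewShape) (h : A.supp = B.supp) (hA : A.Ribbon) :
    B.Ribbon := by
  classical
  obtain ⟨hAcon, hA2⟩ := hA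
  have hA2' : SuppRibbonAux.No2x2 A := hA2
  have hAne : A.cells.Nonempty := hAcon.1
  have hDEA := SuppRibbonAux.Dset_subset_Eset hA2'
  have hlamA : ((A.size - (SuppRibbonAux.Dset A).card) ::ₘ
      Multiset.replicate (SuppRibbonAux.Dset A).card 1) ∈ A.supp :=
    SuppRibbonAux.construct A hAne hA2' _ (subset_refl _) hDEA
  set pA := (SuppRibbonAux.Dset A).card with hpA
  have haA : 1 ≤ A.size - pA := by
    have h1 : pA ≤ (SuppRibbonAux.Eset A).card := Finset.card_le_card hDEA
    have h2 : (SuppRibbonAux.Eset A).card < A.numRows := SuppRibbonAux.Ecard_lt hAne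
    have h3 : A.numRows ≤ A.size := Finset.card_image_le
    omega
  have hlamB : ((A.size - pA) ::ₘ Multiset.replicate pA 1) ∈ B.supp := by
    rw [← h]; exact hlamA
  obtain ⟨h0B, TB, hLRB, hcontB⟩ := hlamB
  have hBne : B.cells.Nonempty := by
    have h1 : B.content TB 1 = A.size - pA := by
      have := hcontB 0
      rwa [SuppRibbonAux.hook_part0 haA] at this
    rw [SkewShape.content] at h1
    have hpos : 0 < (B.cells.filter fun c => TB c = 1).card := by omega
    obtain ⟨c, hc⟩ := Finset.card_pos.mp hpos
    exact ⟨c, (Finset.filter_subset _ _) hc⟩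
  have hB2 : SuppRibbonAux.No2x2 B := by
    apply SuppRibbonAux.no2x2_of_bounded hLRB
    intro k hk
    obtain ⟨i, rfl⟩ : ∃ i, k = i + 2 := ⟨k - 2, by omega⟩
    rw [hcontB (i + 1), SuppRibbonAux.hook_part_succ haA]
    split <;> omega
  have hDEB := SuppRibbonAux.Dset_subset_Eset hB2
  have hlamD : ((B.size - (SuppRibbonAux.Dset B).card) ::ₘ
      Multiset.replicate (SuppRibbonAux.Dset B).card 1) ∈ A.supp := by
    rw [h]; exact SuppRibbonAux.construct B hBne hB2 _ (subset_refl _) hDEB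
  have hlamE : ((B.size - (SuppRibbonAux.Eset B).card) ::ₘ
      Multiset.replicate (SuppRibbonAux.Eset B).card 1) ∈ A.supp := by
    rw [h]; exact SuppRibbonAux.construct B hBne hB2 _ hDEB (subset_refl _)
  have hEsmall : (SuppRibbonAux.Eset B).card < B.size := by
    have h2 : (SuppRibbonAux.Eset B).card < B.numRows := SuppRibbonAux.Ecard_lt hBne
    have h3 : B.numRows ≤ B.size := Finset.card_image_le
    omega
  have hDsmall : (SuppRibbonAux.Dset B).card ≤ (SuppRibbonAux.Eset B).card :=
    Finset.card_le_card hDEB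
  have hr1 := SuppRibbonAux.rigid A hAcon hA2' (by omega) hlamD
  have hr2 := SuppRibbonAux.rigid A hAcon hA2' (by omega) hlamE
  have hcards : (SuppRibbonAux.Dset B).card = (SuppRibbonAux.Eset B).card := by omega
  have hDE : SuppRibbonAux.Dset B = SuppRibbonAux.Eset B :=
    Finset.eq_of_subset_of_card_le hDEB (le_of_eq hcards.symm)
  have hED : SuppRibbonAux.Eset B ⊆ SuppRibbonAux.Dset B := by
    rw [hDE]
  exact ⟨SuppRibbonAux.connected_of hBne hED, hB2⟩
end

section
/- If A is a connected skew shape with N boxes that is not a ribbon, then there exists a ribbon R with N boxes such that s_R − s_A is Schur-positive and supp(A) is strictly contained in supp(R). -/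
namespace RibbonConstr

variable (m : ℕ) (r : ℕ → ℕ)

/-- Left endpoint of row `k` of the ribbon. -/
def tf (k : ℕ) : ℕ := ∑ j ∈ Finset.Ico (k + 1) m, (r j - 1)

lemma tf_succ {k : ℕ} (h : k + 1 < m) :
    tf m r k = (r (k + 1) - 1) + tf m r (k + 1) :=
  Finset.sum_eq_sum_Ico_succ_bot h _

lemma tf_anti {k k' : ℕ} (h : k ≤ k') : tf m r k' ≤ tf m r k :=
  Finset.sum_le_sum_of_subset (Finset.Ico_subset_Ico (by omega) le_rfl)

variable (hr : ∀ k < m, 1 ≤ r k)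

include hr in
lemma te_anti {k k' : ℕ} (h : k ≤ k') (h' : k' < m) :
    tf m r k' + r k' ≤ tf m r k + r k := by
  induction k', h using Nat.le_induction with
  | base => exact le_refl _
  | succ n hn ih =>
    have h1 : tf m r n = (r (n + 1) - 1) + tf m r (n + 1) := tf_succ m r h'
    have h2 := hr (n + 1) h'
    have h3 := ih (by omega)
    have h4 := hr n (by omega)
    omega

def outerCells : Finset (ℕ × ℕ) :=
  (Finset.range m).biUnion fun k => {k} ×ˢ Finset.range (tf m r k + r k)

def innerCells : Finset (ℕ × ℕ) :=
  (Finset.range m).biUnion fun k => {k} ×ˢ Finset.range (tf m r k)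

lemma mem_outerCells {p : ℕ × ℕ} : p ∈ outerCells m r ↔
    p.1 < m ∧ p.2 < tf m r p.1 + r p.1 := by
  simp only [outerCells, Finset.mem_biUnion, Finset.mem_range, Finset.mem_product,
    Finset.mem_singleton]
  constructor
  · rintro ⟨k, hk, hpk, h2⟩; subst hpk; exact ⟨hk, h2⟩
  · rintro ⟨h1, h2⟩; exact ⟨p.1, h1, rfl, h2⟩

lemma mem_innerCells {p : ℕ × ℕ} : p ∈ innerCells m r ↔
    p.1 < m ∧ p.2 < tf m r p.1 := by
  simp only [innerCells, Finset.mem_biUnion, Finset.mem_range, Finset.mem_product,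
    Finset.mem_singleton]
  constructor
  · rintro ⟨k, hk, hpk, h2⟩; subst hpk; exact ⟨hk, h2⟩
  · rintro ⟨h1, h2⟩; exact ⟨p.1, h1, rfl, h2⟩

include hr in
lemma outer_lower : IsLowerSet ((outerCells m r : Finset (ℕ × ℕ)) : Set (ℕ × ℕ)) := by
  intro p q hle hp
  rw [Finset.mem_coe, mem_outerCells] at hp ⊢
  obtain ⟨hle1, hle2⟩ := hle
  have h2 := te_anti m r hr hle1 hp.1
  exact ⟨by omega, by omega⟩

lemma inner_lower : IsLowerSet ((innerCells m r : Finset (ℕ × ℕ)) : Set (ℕ × ℕ)) := by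
  intro p q hle hp
  rw [Finset.mem_coe, mem_innerCells] at hp ⊢
  obtain ⟨hle1, hle2⟩ := hle
  have h2 := tf_anti m r (hle1 : q.1 ≤ p.1)
  exact ⟨by omega, by omega⟩

/-- The ribbon skew shape with `m` rows of lengths `r 0, …, r (m-1)` (top to
bottom), consecutive rows overlapping in exactly one column. -/
def Rsh : SkewShape where
  outer := ⟨outerCells m r, outer_lower m r hr⟩
  inner := ⟨innerCells m r, inner_lower m r⟩
  inner_le := by
    rw [← YoungDiagram.cells_subset_iff]
    intro p hp
    simp only [YoungDiagram.cells] at hp ⊢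
    rw [mem_innerCells] at hp
    rw [mem_outerCells]
    exact ⟨hp.1, by omega⟩

lemma mem_Rcells {p : ℕ × ℕ} : p ∈ (Rsh m r hr).cells ↔
    p.1 < m ∧ tf m r p.1 ≤ p.2 ∧ p.2 < tf m r p.1 + r p.1 := by
  show p ∈ outerCells m r \ innerCells m r ↔ _
  rw [Finset.mem_sdiff, mem_outerCells, mem_innerCells]
  constructor
  · rintro ⟨⟨h1, h2⟩, h3⟩
    refine ⟨h1, ?_, h2⟩
    by_contra h
    exact h3 ⟨h1, by omega⟩
  · rintro ⟨h1, h2, h3⟩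
    exact ⟨⟨h1, h3⟩, fun hc => by omega⟩

lemma base_mem (hm : 0 < m) : ((0, tf m r 0) : ℕ × ℕ) ∈ (Rsh m r hr).cells := by
  rw [mem_Rcells]
  dsimp only
  exact ⟨hm, le_rfl, by have := hr 0 hm; omega⟩

lemma first_mem {k : ℕ} (hk : k < m) : ((k, tf m r k) : ℕ × ℕ) ∈ (Rsh m r hr).cells := by
  rw [mem_Rcells]
  dsimp only
  exact ⟨hk, le_rfl, by have := hr k hk; omega⟩

lemma link_mem {k : ℕ} (hk : k + 1 < m) :
    ((k + 1, tf m r k) : ℕ × ℕ) ∈ (Rsh m r hr).cells := by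
  rw [mem_Rcells]
  have h1 := tf_succ m r hk
  have h2 := hr (k + 1) hk
  dsimp only
  exact ⟨hk, tf_anti m r (by omega), by omega⟩

lemma same_side {B C : Finset (ℕ × ℕ)} (hUn : B ∪ C = (Rsh m r hr).cells)
    (hSep : ∀ b ∈ B, ∀ c ∈ C, b.1 ≠ c.1 ∧ b.2 ≠ c.2) {x y : ℕ × ℕ}
    (hx : x ∈ B) (hy : y ∈ (Rsh m r hr).cells) (hxy : x.1 = y.1 ∨ x.2 = y.2) : y ∈ B := by
  rw [← hUn] at hy
  rcases Finset.mem_union.mp hy with h | h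
  · exact h
  · rcases hxy with h1 | h1
    · exact absurd h1 (hSep x hx y h).1
    · exact absurd h1 (hSep x hx y h).2

lemma Rsh_connected (hm : 0 < m) : (Rsh m r hr).Connected := by
  constructor
  · exact ⟨(0, tf m r 0), base_mem m r hr hm⟩
  · rintro ⟨B, C, hB, hC, hUn, hInt, hSep⟩
    have anchored : ∀ k, k < m → (((k, tf m r k) : ℕ × ℕ) ∈ B ↔ ((0, tf m r 0) : ℕ × ℕ) ∈ B) := by
      intro k
      induction k with
      | zero => intro _; rfl
      | succ n ih =>
        intro hk
        have hn : n < m := by omega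
        rw [← ih hn]
        constructor
        · intro h
          have h1 : ((n + 1, tf m r n) : ℕ × ℕ) ∈ B :=
            same_side m r hr hUn hSep h (link_mem m r hr hk) (Or.inl rfl)
          exact same_side m r hr hUn hSep h1 (first_mem m r hr hn) (Or.inr rfl)
        · intro h
          have h1 : ((n + 1, tf m r n) : ℕ × ℕ) ∈ B :=
            same_side m r hr hUn hSep h (link_mem m r hr hk) (Or.inr rfl)
          exact same_side m r hr hUn hSep h1 (first_mem m r hr hk) (Or.inl rfl)
    have claim : ∀ x ∈ B, ∀ y ∈ (Rsh m r hr).cells, y ∈ B := by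
      intro x hx y hy
      have hxc : x ∈ (Rsh m r hr).cells := by
        rw [← hUn]; exact Finset.mem_union_left _ hx
      have hx1 : x.1 < m := ((mem_Rcells m r hr).mp hxc).1
      have hy1 : y.1 < m := ((mem_Rcells m r hr).mp hy).1
      have h1 : ((x.1, tf m r x.1) : ℕ × ℕ) ∈ B :=
        same_side m r hr hUn hSep hx (first_mem m r hr hx1) (Or.inl rfl)
      have h2 : ((0, tf m r 0) : ℕ × ℕ) ∈ B := (anchored x.1 hx1).mp h1
      have h3 : ((y.1, tf m r y.1) : ℕ × ℕ) ∈ B := (anchored y.1 hy1).mpr h2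
      exact same_side m r hr hUn hSep h3 hy (Or.inl rfl)
    obtain ⟨b, hb⟩ := hB
    obtain ⟨c, hc⟩ := hC
    have hcc : c ∈ (Rsh m r hr).cells := by
      rw [← hUn]; exact Finset.mem_union_right _ hc
    have : c ∈ B := claim b hb c hcc
    have : c ∈ B ∩ C := Finset.mem_inter.mpr ⟨this, hc⟩
    rw [hInt] at this
    exact absurd this (Finset.notMem_empty c)

lemma Rsh_ribbon (hm : 0 < m) : (Rsh m r hr).Ribbon := by
  refine ⟨Rsh_connected m r hr hm, ?_⟩
  rintro i j ⟨h1, h2, h3, h4⟩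
  rw [mem_Rcells] at h1 h2 h3 h4
  dsimp only at h1 h2 h3 h4
  have hk : i + 1 < m := h3.1
  have e1 := tf_succ m r hk
  have e2 := hr (i + 1) hk
  omega

lemma Rcells_eq : (Rsh m r hr).cells =
    (Finset.range m).biUnion fun k => {k} ×ˢ Finset.Ico (tf m r k) (tf m r k + r k) := by
  ext p
  rw [mem_Rcells]
  simp only [Finset.mem_biUnion, Finset.mem_range, Finset.mem_product, Finset.mem_singleton,
    Finset.mem_Ico]
  constructor
  · rintro ⟨h1, h2, h3⟩; exact ⟨p.1, h1, rfl, h2, h3⟩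
  · rintro ⟨k, hk, hpk, h2, h3⟩; subst hpk; exact ⟨hk, h2, h3⟩

lemma Rsh_size : (Rsh m r hr).size = ∑ k ∈ Finset.range m, r k := by
  unfold SkewShape.size
  rw [Rcells_eq, Finset.card_biUnion]
  · refine Finset.sum_congr rfl fun k _ => ?_
    rw [Finset.card_product, Finset.card_singleton, Nat.card_Ico]
    omega
  · intro a _ b _ hab
    simp only [Finset.disjoint_left]
    rintro ⟨x, y⟩ hx hy
    rw [Finset.mem_product, Finset.mem_singleton] at hx hy
    exact hab (hx.1 ▸ hy.1 ▸ rfl)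

end RibbonConstr


lemma part_eq_zero_of_le {lam : Multiset ℕ} {i : ℕ} (h : Multiset.card lam ≤ i) :
    part lam i = 0 := by
  unfold part
  apply List.getD_eq_default
  rw [Multiset.length_sort]
  exact h

lemma LRset_entry_bound (S : SkewShape) {lam : Multiset ℕ} {T : ℕ × ℕ → ℕ}
    (hT : T ∈ S.LRset lam) {c : ℕ × ℕ} (hc : c ∈ S.cells) : T c ≤ Multiset.card lam := by
  by_contra h
  push_neg at h
  have hpos : 1 ≤ T c := hT.1.1.1 c hc
  have h1 : 0 < S.content T (T c) :=
    Finset.card_pos.mpr ⟨c, Finset.mem_filter.mpr ⟨hc, rfl⟩⟩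
  have h2 : S.content T ((T c - 1) + 1) = part lam (T c - 1) := hT.2.2 (T c - 1)
  rw [show T c - 1 + 1 = T c from by omega] at h2
  rw [part_eq_zero_of_le (by omega)] at h2
  omega

lemma LRset_finite (S : SkewShape) (lam : Multiset ℕ) : (S.LRset lam).Finite := by
  classical
  set n := Multiset.card lam with hn
  set F : (ℕ × ℕ → ℕ) → ({x // x ∈ S.cells} → Fin (n + 1)) :=
    fun T c => ⟨min (T c.1) n, by omega⟩ with hF
  have hinj : Set.InjOn F (S.LRset lam) := by
    intro T hT T' hT' heq
    funext q
    by_cases hq : q ∈ S.cells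
    · have b1 := LRset_entry_bound S hT hq
      have b2 := LRset_entry_bound S hT' hq
      have := congrFun heq ⟨q, hq⟩
      rw [hF] at this
      simp only [Fin.mk.injEq] at this
      omega
    · rw [hT.2.1 q hq, hT'.2.1 q hq]
  exact Set.Finite.of_finite_image (Set.toFinite _) hinj

lemma mem_supp_of_LRset {S : SkewShape} {lam : Multiset ℕ} {T : ℕ × ℕ → ℕ}
    (h0 : 0 ∉ lam) (hT : T ∈ S.LRset lam) : lam ∈ S.supp :=
  ⟨h0, T, hT.1, hT.2.2⟩

lemma LRset_nonempty_of_supp {S : SkewShape} {lam : Multiset ℕ} (h : lam ∈ S.supp) :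
    (S.LRset lam).Nonempty := by
  classical
  obtain ⟨h0, T, hLR, hcont⟩ := h
  set T0 : ℕ × ℕ → ℕ := fun c => if c ∈ S.cells then T c else 0 with hT0
  have hon : ∀ c ∈ S.cells, T0 c = T c := fun c hc => if_pos hc
  have hfilt : ∀ (v : ℕ), (S.cells.filter fun c => T0 c = v) = (S.cells.filter fun c => T c = v) :=
    fun v => Finset.filter_congr fun x hx => by rw [hon x hx]
  refine ⟨T0, ⟨⟨?_, ?_, ?_⟩, ?_⟩, fun c hc => if_neg hc, ?_⟩
  · intro c hc; rw [hon c hc]; exact hLR.1.1 c hc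
  · intro i j j' h1 h2 h3
    rw [hon _ h1, hon _ h2]
    exact hLR.1.2.1 i j j' h1 h2 h3
  · intro i i' j h1 h2 h3
    rw [hon _ h1, hon _ h2]
    exact hLR.1.2.2 i i' j h1 h2 h3
  · intro d hd k
    have e : ∀ (v : ℕ), (S.cells.filter fun c => T0 c = v ∧ ReadsBefore c d)
        = (S.cells.filter fun c => T c = v ∧ ReadsBefore c d) :=
      fun v => Finset.filter_congr fun x hx => by rw [hon x hx]
    rw [e, e]
    exact hLR.2 d hd k
  · intro i
    show (S.cells.filter fun c => T0 c = i + 1).card = part lam i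
    rw [hfilt]
    exact hcont i

lemma getD_replicate {w j x : ℕ} : (List.replicate w x).getD j 0 = if j < w then x else 0 := by
  induction w generalizing j with
  | zero => simp
  | succ n ih =>
    cases j with
    | zero => simp [List.replicate_succ]
    | succ jj =>
      rw [List.replicate_succ, List.getD_cons_succ, ih]
      simp [Nat.succ_lt_succ_iff]

lemma sort_cons_replicate {a w : ℕ} (ha : 1 ≤ a) :
    Multiset.sort (a ::ₘ Multiset.replicate w 1) (· ≥ ·) = a :: List.replicate w 1 := by
  refine (fun hp hs => List.Perm.eq_of_pairwise' (r := (· ≥ ·)) (Multiset.pairwise_sort _ _) hs hp) ?_ ?_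
  · apply Multiset.coe_eq_coe.mp
    rw [Multiset.sort_eq]
    show a ::ₘ Multiset.replicate w 1 = ↑(a :: List.replicate w 1)
    rw [← Multiset.cons_coe, Multiset.coe_replicate]
  · rw [List.pairwise_cons]
    refine ⟨fun b hb => ?_, List.pairwise_replicate.mpr (by omega)⟩
    rw [List.eq_of_mem_replicate hb]
    omega

lemma part_cons_replicate {a w : ℕ} (ha : 1 ≤ a) (i : ℕ) :
    part (a ::ₘ Multiset.replicate w 1) i = if i = 0 then a else if i ≤ w then 1 else 0 := by
  unfold part
  rw [sort_cons_replicate ha]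
  cases i with
  | zero => simp
  | succ n =>
    rw [List.getD_cons_succ, getD_replicate]
    rw [if_neg (show ¬ (n + 1 = 0) by omega)]
    rcases Nat.lt_or_ge n w with h | h
    · rw [if_pos h, if_pos (show n + 1 ≤ w by omega)]
    · rw [if_neg (show ¬ n < w by omega), if_neg (show ¬ (n + 1 ≤ w) by omega)]

lemma zero_notin_cons_replicate {a w : ℕ} (ha : 1 ≤ a) :
    (0 : ℕ) ∉ a ::ₘ Multiset.replicate w 1 := by
  rw [Multiset.mem_cons]
  rintro (h | h)
  · omega
  · exact absurd (Multiset.eq_of_mem_replicate h) (by omega)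

namespace SkewProof

variable (A : SkewShape)

/-- Outer row length. -/
def lamf (i : ℕ) : ℕ := A.outer.rowLen i

/-- Inner row length. -/
def muf (i : ℕ) : ℕ := A.inner.rowLen i

lemma mem_Acells {i j : ℕ} : (i, j) ∈ A.cells ↔ muf A i ≤ j ∧ j < lamf A i := by
  unfold SkewShape.cells
  rw [Finset.mem_sdiff, YoungDiagram.mem_cells, YoungDiagram.mem_cells,
    YoungDiagram.mem_iff_lt_rowLen, YoungDiagram.mem_iff_lt_rowLen]
  unfold lamf muf
  omega

lemma mu_le_lam (i : ℕ) : muf A i ≤ lamf A i := by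
  rcases Nat.eq_zero_or_pos (muf A i) with h0 | h0
  · omega
  · have h1 : (i, muf A i - 1) ∈ A.inner := by
      rw [YoungDiagram.mem_iff_lt_rowLen]; unfold muf at h0 ⊢; omega
    have h2 : (i, muf A i - 1) ∈ A.outer := by
      rw [← YoungDiagram.mem_cells] at h1 ⊢
      exact (YoungDiagram.cells_subset_iff.mpr A.inner_le) h1
    rw [YoungDiagram.mem_iff_lt_rowLen] at h2
    unfold lamf
    omega

lemma lam_anti {i i' : ℕ} (h : i ≤ i') : lamf A i' ≤ lamf A i :=
  YoungDiagram.rowLen_anti _ _ _ h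

lemma mu_anti {i i' : ℕ} (h : i ≤ i') : muf A i' ≤ muf A i :=
  YoungDiagram.rowLen_anti _ _ _ h

lemma mem_rowSet {i : ℕ} : i ∈ A.rowSet ↔ muf A i < lamf A i := by
  unfold SkewShape.rowSet
  rw [Finset.mem_image]
  constructor
  · rintro ⟨⟨a, b⟩, hc, rfl⟩
    have := (mem_Acells A).mp hc
    dsimp only
    omega
  · intro h
    exact ⟨(i, muf A i), (mem_Acells A).mpr ⟨le_rfl, h⟩, rfl⟩

lemma col_interval {i i' x j : ℕ} (h1 : (i, j) ∈ A.cells) (h2 : (i', j) ∈ A.cells)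
    (hx1 : i ≤ x) (hx2 : x ≤ i') : (x, j) ∈ A.cells := by
  rw [mem_Acells] at h1 h2 ⊢
  have := mu_anti A hx1
  have := lam_anti A hx2
  omega

lemma rowLen_eq (i : ℕ) : A.rowLen i = lamf A i - muf A i := by
  unfold SkewShape.rowLen
  have : (A.cells.filter fun c => c.1 = i) =
      (Finset.Ico (muf A i) (lamf A i)).map
        ⟨fun j => (i, j), fun a b h => by simpa using h⟩ := by
    ext ⟨a, b⟩
    simp only [Finset.mem_filter, Finset.mem_map, Finset.mem_Ico, Function.Embedding.coeFn_mk]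
    constructor
    · rintro ⟨hc, rfl⟩
      have := (mem_Acells A).mp hc
      exact ⟨b, ⟨this.1, this.2⟩, rfl⟩
    · rintro ⟨j, hj, h⟩
      obtain ⟨rfl, rfl⟩ : i = a ∧ j = b := by
        constructor <;> [exact congrArg Prod.fst h; exact congrArg Prod.snd h]
      exact ⟨(mem_Acells A).mpr ⟨hj.1, hj.2⟩, rfl⟩
  rw [this, Finset.card_map, Nat.card_Ico]

/-- Package a decidable predicate into a disconnection witness. -/
lemma disconn_of_pred (P : ℕ × ℕ → Prop) [DecidablePred P]
    (hb : ∃ b ∈ A.cells, P b) (hc : ∃ c ∈ A.cells, ¬P c)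
    (hsep : ∀ b ∈ A.cells, ∀ c ∈ A.cells, P b → ¬P c → b.1 ≠ c.1 ∧ b.2 ≠ c.2) :
    A.Disconnected := by
  refine ⟨A.cells.filter P, A.cells.filter fun c => ¬P c, ?_, ?_, ?_, ?_, ?_⟩
  · obtain ⟨b, hb1, hb2⟩ := hb
    exact ⟨b, Finset.mem_filter.mpr ⟨hb1, hb2⟩⟩
  · obtain ⟨c, hc1, hc2⟩ := hc
    exact ⟨c, Finset.mem_filter.mpr ⟨hc1, hc2⟩⟩
  · exact Finset.filter_union_filter_not_eq P A.cells
  · rw [← Finset.disjoint_iff_inter_eq_empty]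
    exact Finset.disjoint_filter_filter_not A.cells A.cells P
  · intro b hb c hc
    rw [Finset.mem_filter] at hb hc
    exact hsep b hb.1 c hc.1 hb.2 hc.2

variable (hconn : A.Connected)

include hconn in
lemma rowSet_nonempty : A.rowSet.Nonempty := by
  obtain ⟨c, hc⟩ := hconn.1
  exact ⟨c.1, Finset.mem_image_of_mem _ hc⟩

include hconn in
lemma rowSet_interval {i i' x : ℕ} (h1 : i ∈ A.rowSet) (h2 : i' ∈ A.rowSet)
    (hx1 : i ≤ x) (hx2 : x ≤ i') : x ∈ A.rowSet := by
  by_contra hx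
  have hxi : i ≠ x := fun h => hx (h ▸ h1)
  have hxi' : x ≠ i' := fun h => hx (h ▸ h2)
  rw [mem_rowSet] at h1 h2
  refine hconn.2 (disconn_of_pred A (fun c => c.1 < x) ?_ ?_ ?_)
  · exact ⟨(i, muf A i), (mem_Acells A).mpr ⟨le_rfl, h1⟩, by dsimp only; omega⟩
  · exact ⟨(i', muf A i'), (mem_Acells A).mpr ⟨le_rfl, h2⟩, by dsimp only; omega⟩
  · rintro ⟨ib, jb⟩ hbc ⟨ic, jc⟩ hcc hPb hPc
    dsimp only at hPb hPc ⊢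
    refine ⟨by omega, ?_⟩
    intro hj
    subst hj
    have hmm : (x, jb) ∈ A.cells := col_interval A hbc hcc (by omega) (by omega)
    have := (mem_Acells A).mp hmm
    exact hx ((mem_rowSet A).mpr (by omega))

include hconn in
lemma overlap {i : ℕ} (h1 : i ∈ A.rowSet) (h2 : i + 1 ∈ A.rowSet) :
    muf A i < lamf A (i + 1) := by
  by_contra hov
  push_neg at hov
  rw [mem_rowSet] at h1 h2
  refine hconn.2 (disconn_of_pred A (fun c => c.1 ≤ i) ?_ ?_ ?_)
  · exact ⟨(i, muf A i), (mem_Acells A).mpr ⟨le_rfl, h1⟩, by dsimp only; omega⟩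
  · exact ⟨(i + 1, muf A (i + 1)), (mem_Acells A).mpr ⟨le_rfl, h2⟩, by dsimp only; omega⟩
  · rintro ⟨ib, jb⟩ hbc ⟨ic, jc⟩ hcc hPb hPc
    dsimp only at hPb hPc ⊢
    have hb := (mem_Acells A).mp hbc
    have hc := (mem_Acells A).mp hcc
    have g1 : muf A i ≤ jb := le_trans (mu_anti A hPb) hb.1
    have g2 : jc < lamf A (i + 1) := lt_of_lt_of_le hc.2 (lam_anti A (by omega))
    omega

/-- Index of the top nonempty row. -/
def i0 : ℕ := A.rowSet.min' (rowSet_nonempty A hconn)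

/-- Index of the bottom nonempty row. -/
def iM : ℕ := A.rowSet.max' (rowSet_nonempty A hconn)

include hconn in
lemma i0_le_iM : i0 A hconn ≤ iM A hconn :=
  Finset.le_max' _ _ (Finset.min'_mem _ _)

/-- The number of (necessarily consecutive) nonempty rows. -/
def mA : ℕ := iM A hconn - i0 A hconn + 1

/-- The row lengths, from the top. -/
def rA : ℕ → ℕ := fun k => lamf A (i0 A hconn + k) - muf A (i0 A hconn + k)

include hconn in
lemma mem_of_range {k : ℕ} (hk : k < mA A hconn) : i0 A hconn + k ∈ A.rowSet := by
  have h0 := i0_le_iM A hconn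
  unfold mA iM i0 at *
  exact rowSet_interval A hconn (Finset.min'_mem _ _) (Finset.max'_mem _ _)
    (by omega) (by omega)

include hconn in
lemma hrA : ∀ k < mA A hconn, 1 ≤ rA A hconn k := by
  intro k hk
  have := (mem_rowSet A).mp (mem_of_range A hconn hk)
  unfold rA
  omega

include hconn in
lemma lam_eq {k : ℕ} (hk : k < mA A hconn) :
    muf A (i0 A hconn + k) + rA A hconn k = lamf A (i0 A hconn + k) := by
  have := (mem_rowSet A).mp (mem_of_range A hconn hk)
  unfold rA
  omega

include hconn in
lemma rowSet_eq : A.rowSet = Finset.Icc (i0 A hconn) (iM A hconn) := by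
  ext i
  rw [Finset.mem_Icc]
  constructor
  · intro h
    exact ⟨Finset.min'_le _ _ h, Finset.le_max' _ _ h⟩
  · rintro ⟨h1, h2⟩
    exact rowSet_interval A hconn (Finset.min'_mem _ _) (Finset.max'_mem _ _) h1 h2

include hconn in
lemma size_eq : A.size = ∑ k ∈ Finset.range (mA A hconn), rA A hconn k := by
  unfold SkewShape.size
  have h1 : A.cells.card = ∑ i ∈ A.rowSet, (A.cells.filter fun c => c.1 = i).card :=
    Finset.card_eq_sum_card_fiberwise fun x hx => Finset.mem_image_of_mem _ hx
  have h2 : Finset.Icc (i0 A hconn) (iM A hconn) =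
      Finset.map ⟨fun k => i0 A hconn + k, add_right_injective _⟩
        (Finset.range (mA A hconn)) := by
    ext i
    simp only [Finset.mem_Icc, Finset.mem_map, Finset.mem_range, Function.Embedding.coeFn_mk]
    have h0 := i0_le_iM A hconn
    unfold mA
    constructor
    · rintro ⟨ha, hb⟩; exact ⟨i - i0 A hconn, by omega, by omega⟩
    · rintro ⟨k, hk, rfl⟩; omega
  rw [h1, rowSet_eq A hconn, h2, Finset.sum_map]
  simp only [Function.Embedding.coeFn_mk]
  refine Finset.sum_congr rfl fun k hk => ?_
  have : (A.cells.filter fun c => c.1 = i0 A hconn + k).card = A.rowLen (i0 A hconn + k) := rfl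
  rw [this, rowLen_eq]
  rfl

/-- The ribbon with the same row lengths as `A`. -/
def RB : SkewShape :=
  RibbonConstr.Rsh (mA A hconn) (rA A hconn) (hrA A hconn)

/-- Shorthand for the left endpoints of the ribbon's rows. -/
def tA : ℕ → ℕ := RibbonConstr.tf (mA A hconn) (rA A hconn)

include hconn in
lemma mem_RB {p : ℕ × ℕ} : p ∈ (RB A hconn).cells ↔
    p.1 < mA A hconn ∧ tA A hconn p.1 ≤ p.2 ∧ p.2 < tA A hconn p.1 + rA A hconn p.1 :=
  RibbonConstr.mem_Rcells _ _ _

/-- The canonical bijection from ribbon cells to cells of `A`. -/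
def gmap : ℕ × ℕ → ℕ × ℕ :=
  fun p => (i0 A hconn + p.1, p.2 - tA A hconn p.1 + muf A (i0 A hconn + p.1))

/-- Inverse of `gmap`. -/
def hmap : ℕ × ℕ → ℕ × ℕ :=
  fun q => (q.1 - i0 A hconn, q.2 - muf A q.1 + tA A hconn (q.1 - i0 A hconn))

include hconn in
lemma gmap_mem {p : ℕ × ℕ} (hp : p ∈ (RB A hconn).cells) : gmap A hconn p ∈ A.cells := by
  rw [mem_RB] at hp
  obtain ⟨h1, h2, h3⟩ := hp
  have h4 := lam_eq A hconn h1
  show (_, _) ∈ A.cells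
  rw [mem_Acells]
  omega

include hconn in
lemma rowSet_bounds {q : ℕ × ℕ} (hq : q ∈ A.cells) :
    i0 A hconn ≤ q.1 ∧ q.1 ≤ iM A hconn ∧ q.1 - i0 A hconn < mA A hconn := by
  have hm : q.1 ∈ A.rowSet := Finset.mem_image_of_mem _ hq
  rw [rowSet_eq A hconn, Finset.mem_Icc] at hm
  unfold mA
  omega

include hconn in
lemma hmap_mem {q : ℕ × ℕ} (hq : q ∈ A.cells) : hmap A hconn q ∈ (RB A hconn).cells := by
  obtain ⟨hb1, hb2, hb3⟩ := rowSet_bounds A hconn hq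
  obtain ⟨q1, q2⟩ := q
  rw [mem_Acells] at hq
  dsimp only at hb1 hb2 hb3
  have h4 := lam_eq A hconn hb3
  rw [show i0 A hconn + (q1 - i0 A hconn) = q1 from by omega] at h4
  rw [mem_RB]
  unfold hmap
  dsimp only
  omega

include hconn in
lemma hg {p : ℕ × ℕ} (hp : p ∈ (RB A hconn).cells) : hmap A hconn (gmap A hconn p) = p := by
  rw [mem_RB] at hp
  obtain ⟨p1, p2⟩ := p
  dsimp only at hp
  unfold hmap gmap
  dsimp only
  have h4 := lam_eq A hconn hp.1
  rw [show i0 A hconn + p1 - i0 A hconn = p1 from by omega]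
  refine Prod.ext rfl ?_
  dsimp only
  omega

include hconn in
lemma gh {q : ℕ × ℕ} (hq : q ∈ A.cells) : gmap A hconn (hmap A hconn q) = q := by
  obtain ⟨hb1, hb2, hb3⟩ := rowSet_bounds A hconn hq
  obtain ⟨q1, q2⟩ := q
  rw [mem_Acells] at hq
  dsimp only at hb1 hb2 hb3
  unfold gmap hmap
  dsimp only
  rw [show i0 A hconn + (q1 - i0 A hconn) = q1 from by omega]
  refine Prod.ext rfl ?_
  dsimp only
  omega

include hconn in
lemma g_rb {p p' : ℕ × ℕ} (hp : p ∈ (RB A hconn).cells) (hp' : p' ∈ (RB A hconn).cells) :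
    ReadsBefore (gmap A hconn p) (gmap A hconn p') ↔ ReadsBefore p p' := by
  rw [mem_RB] at hp hp'
  obtain ⟨p1, p2⟩ := p
  obtain ⟨q1, q2⟩ := p'
  dsimp only at hp hp'
  unfold ReadsBefore gmap
  dsimp only
  constructor
  · rintro (h | ⟨h1, h2⟩)
    · exact Or.inl (by omega)
    · have hq : p1 = q1 := by omega
      subst hq
      exact Or.inr ⟨rfl, by omega⟩
  · rintro (h | ⟨h1, h2⟩)
    · exact Or.inl (by omega)
    · subst h1
      exact Or.inr ⟨rfl, by omega⟩

include hconn in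
lemma card_filter_transport (P : ℕ × ℕ → Prop) [DecidablePred P] :
    ((RB A hconn).cells.filter fun c => P (gmap A hconn c)).card
      = (A.cells.filter P).card := by
  refine Finset.card_bij (fun a _ => gmap A hconn a) ?_ ?_ ?_
  · intro a ha
    rw [Finset.mem_filter] at ha ⊢
    exact ⟨gmap_mem A hconn ha.1, ha.2⟩
  · intro a ha b hb hab
    rw [Finset.mem_filter] at ha hb
    rw [← hg A hconn ha.1, ← hg A hconn hb.1, hab]
  · intro b hb
    rw [Finset.mem_filter] at hb
    refine ⟨hmap A hconn b, Finset.mem_filter.mpr ⟨hmap_mem A hconn hb.1, ?_⟩, gh A hconn hb.1⟩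
    rw [gh A hconn hb.1]
    exact hb.2

/-- Transport of a filling of `A` to a filling of the ribbon. -/
def Phi (T : ℕ × ℕ → ℕ) : ℕ × ℕ → ℕ :=
  fun p => if p ∈ (RB A hconn).cells then T (gmap A hconn p) else 0

lemma Phi_on {T : ℕ × ℕ → ℕ} {p : ℕ × ℕ} (hp : p ∈ (RB A hconn).cells) :
    Phi A hconn T p = T (gmap A hconn p) := if_pos hp

include hconn in
lemma tA_succ {k : ℕ} (h : k + 1 < mA A hconn) :
    tA A hconn k = (rA A hconn (k + 1) - 1) + tA A hconn (k + 1) :=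
  RibbonConstr.tf_succ _ _ h

include hconn in
lemma tA_anti {k k' : ℕ} (h : k ≤ k') : tA A hconn k' ≤ tA A hconn k :=
  RibbonConstr.tf_anti _ _ h

include hconn in
lemma col_step {T : ℕ × ℕ → ℕ} (hT : A.IsSsyt T) {k c : ℕ}
    (h1 : (k, c) ∈ (RB A hconn).cells) (h2 : (k + 1, c) ∈ (RB A hconn).cells) :
    T (gmap A hconn (k, c)) < T (gmap A hconn (k + 1, c)) := by
  rw [mem_RB] at h1 h2
  dsimp only at h1 h2
  have hk1 : k + 1 < mA A hconn := h2.1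
  have hsucc := tA_succ A hconn hk1
  have hrk1 := hrA A hconn (k + 1) hk1
  have hc : c = tA A hconn k := by omega
  have hle1 := lam_eq A hconn (by omega : k < mA A hconn)
  have hle2 := lam_eq A hconn hk1
  set i := i0 A hconn + k with hi
  have hik1 : i0 A hconn + (k + 1) = i + 1 := by omega
  have hrs1 : i ∈ A.rowSet := mem_of_range A hconn (by omega)
  have hrs2 : i + 1 ∈ A.rowSet := hik1 ▸ mem_of_range A hconn hk1
  have hov := overlap A hconn hrs1 hrs2
  have hmu := mu_anti A (show i ≤ i + 1 by omega)
  rw [mem_rowSet] at hrs1 hrs2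
  -- the two image cells
  have e1 : gmap A hconn (k, c) = (i, muf A i) := by
    unfold gmap
    dsimp only
    rw [← hi]
    congr 1
    omega
  have e2 : gmap A hconn (k + 1, c) = (i + 1, lamf A (i + 1) - 1) := by
    unfold gmap
    dsimp only
    rw [hik1]
    congr 1
    rw [hik1] at hle2
    omega
  rw [e1, e2]
  have m1 : (i, muf A i) ∈ A.cells := (mem_Acells A).mpr ⟨le_rfl, hrs1⟩
  have m2 : (i + 1, muf A i) ∈ A.cells := (mem_Acells A).mpr ⟨hmu, hov⟩
  have m3 : (i + 1, lamf A (i + 1) - 1) ∈ A.cells := (mem_Acells A).mpr ⟨by omega, by omega⟩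
  calc T (i, muf A i) < T (i + 1, muf A i) := hT.2.2 i (i + 1) (muf A i) m1 m2 (by omega)
    _ ≤ T (i + 1, lamf A (i + 1) - 1) := hT.2.1 (i + 1) _ _ m2 m3 (by omega)

include hconn in
lemma col_chain {T : ℕ × ℕ → ℕ} (hT : A.IsSsyt T) {k k' c : ℕ}
    (h1 : (k, c) ∈ (RB A hconn).cells) (h2 : (k', c) ∈ (RB A hconn).cells) (hkk : k < k') :
    T (gmap A hconn (k, c)) < T (gmap A hconn (k', c)) := by
  induction k', hkk using Nat.le_induction with
  | base => exact col_step A hconn hT h1 h2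
  | succ n hn ih =>
    have hmem : (n, c) ∈ (RB A hconn).cells := by
      rw [mem_RB] at h1 h2 ⊢
      dsimp only at h1 h2 ⊢
      have ha : tA A hconn n ≤ tA A hconn k := tA_anti A hconn (by omega)
      have hb := tA_succ A hconn h2.1
      have hrn := hrA A hconn n (by omega)
      refine ⟨by omega, by omega, by omega⟩
    exact lt_trans (ih hmem) (col_step A hconn hT hmem h2)

include hconn in
lemma ssyt_transport {T : ℕ × ℕ → ℕ} (hT : A.IsSsyt T) :
    (RB A hconn).IsSsyt (Phi A hconn T) := by
  refine ⟨?_, ?_, ?_⟩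
  · intro p hp
    rw [Phi_on A hconn hp]
    exact hT.1 _ (gmap_mem A hconn hp)
  · intro i j j' hm hm' hjj
    rw [Phi_on A hconn hm, Phi_on A hconn hm']
    have hm2 := hm
    have hm3 := hm'
    rw [mem_RB] at hm2 hm3
    dsimp only at hm2 hm3
    refine hT.2.1 (i0 A hconn + i) _ _ (gmap_mem A hconn hm) (gmap_mem A hconn hm') ?_
    show j - tA A hconn i + muf A (i0 A hconn + i) ≤ j' - tA A hconn i + muf A (i0 A hconn + i)
    omega
  · intro i i' j hm hm' hii
    rw [Phi_on A hconn hm, Phi_on A hconn hm']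
    exact col_chain A hconn hT hm hm' hii

include hconn in
lemma count_transport {T : ℕ × ℕ → ℕ} (d : ℕ × ℕ) (hd : d ∈ (RB A hconn).cells) (v : ℕ) :
    ((RB A hconn).cells.filter fun c => Phi A hconn T c = v ∧ ReadsBefore c d).card
      = (A.cells.filter fun c => T c = v ∧ ReadsBefore c (gmap A hconn d)).card := by
  rw [← card_filter_transport A hconn (fun q => T q = v ∧ ReadsBefore q (gmap A hconn d))]
  congr 1
  refine Finset.filter_congr fun x hx => ?_
  rw [Phi_on A hconn hx, g_rb A hconn hx hd]

include hconn in
lemma content_transport {T : ℕ × ℕ → ℕ} (v : ℕ) :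
    (RB A hconn).content (Phi A hconn T) v = A.content T v := by
  unfold SkewShape.content
  rw [← card_filter_transport A hconn (fun q => T q = v)]
  congr 1
  refine Finset.filter_congr fun x hx => ?_
  rw [Phi_on A hconn hx]

include hconn in
lemma isLR_transport {T : ℕ × ℕ → ℕ} (hT : A.IsLR T) :
    (RB A hconn).IsLR (Phi A hconn T) := by
  refine ⟨ssyt_transport A hconn hT.1, ?_⟩
  intro d hd k
  rw [count_transport A hconn d hd, count_transport A hconn d hd]
  exact hT.2 (gmap A hconn d) (gmap_mem A hconn hd) k

include hconn in
lemma LRset_transport {T : ℕ × ℕ → ℕ} {lam : Multiset ℕ} (hT : T ∈ A.LRset lam) :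
    Phi A hconn T ∈ (RB A hconn).LRset lam := by
  obtain ⟨h1, h2, h3⟩ := hT
  refine ⟨isLR_transport A hconn h1, ?_, ?_⟩
  · intro p hp
    exact if_neg hp
  · intro i
    rw [content_transport A hconn]
    exact h3 i

include hconn in
lemma Phi_injOn {lam : Multiset ℕ} : Set.InjOn (Phi A hconn) (A.LRset lam) := by
  intro T hT T' hT' heq
  funext q
  by_cases hq : q ∈ A.cells
  · have e1 : T q = Phi A hconn T (hmap A hconn q) := by
      rw [Phi_on A hconn (hmap_mem A hconn hq), gh A hconn hq]
    have e2 : T' q = Phi A hconn T' (hmap A hconn q) := by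
      rw [Phi_on A hconn (hmap_mem A hconn hq), gh A hconn hq]
    rw [e1, e2, heq]
  · rw [hT.2.1 q hq, hT'.2.1 q hq]

include hconn in
lemma schurpos : (RB A hconn).SchurPosDiff A := by
  intro lam
  exact Set.ncard_le_ncard_of_injOn (Phi A hconn)
    (fun T hT => LRset_transport A hconn hT) (Phi_injOn A hconn) (LRset_finite _ _)

include hconn in
lemma supp_subset : A.supp ⊆ (RB A hconn).supp := by
  intro lam hlam
  obtain ⟨T, hT⟩ := LRset_nonempty_of_supp hlam
  exact mem_supp_of_LRset hlam.1 (LRset_transport A hconn hT)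

include hconn in
lemma special_exists (hnotrib : ¬ A.Ribbon) : ∃ d : ℕ, d + 1 < mA A hconn ∧
    muf A (i0 A hconn + d) + 2 ≤ lamf A (i0 A hconn + d + 1) := by
  unfold SkewShape.Ribbon at hnotrib
  push_neg at hnotrib
  obtain ⟨i, j, h1, h2, h3, h4⟩ := hnotrib hconn
  have hr1 : i ∈ A.rowSet := Finset.mem_image_of_mem _ h1
  have hr2 : i + 1 ∈ A.rowSet := Finset.mem_image_of_mem _ h3
  rw [rowSet_eq A hconn, Finset.mem_Icc] at hr1 hr2
  refine ⟨i - i0 A hconn, by unfold mA; omega, ?_⟩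
  rw [show i0 A hconn + (i - i0 A hconn) = i from by omega]
  rw [show i + 1 = i + 1 from rfl]
  have hj1 := (mem_Acells A).mp h1
  have hj2 := (mem_Acells A).mp h4
  omega

include hconn in
lemma colSet_subset : A.colSet ⊆ Finset.Ico (muf A (iM A hconn)) (lamf A (i0 A hconn)) := by
  intro j hj
  obtain ⟨⟨a, b⟩, hc, rfl⟩ := Finset.mem_image.mp hj
  have hb := rowSet_bounds A hconn hc
  dsimp only at hb
  have hm := (mem_Acells A).mp hc
  rw [Finset.mem_Ico]
  have g1 : muf A (iM A hconn) ≤ muf A a := mu_anti A hb.2.1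
  have g2 : lamf A a ≤ lamf A (i0 A hconn) := lam_anti A hb.1
  omega

include hconn in
lemma key_ineq {d : ℕ} (hd : d + 1 < mA A hconn)
    (hsp : muf A (i0 A hconn + d) + 2 ≤ lamf A (i0 A hconn + d + 1)) :
    ∀ K, K < mA A hconn →
      lamf A (i0 A hconn) + K + (if d < K then 1 else 0) ≤
        (∑ k ∈ Finset.range (K + 1), rA A hconn k) + muf A (i0 A hconn + K) := by
  intro K
  induction K with
  | zero =>
    intro hK
    have := lam_eq A hconn hK
    rw [if_neg (by omega)]
    rw [Finset.sum_range_one]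
    simp only [Nat.add_zero] at this ⊢
    omega
  | succ n ih =>
    intro hK
    have ihn := ih (by omega)
    have hov : muf A (i0 A hconn + n) < lamf A (i0 A hconn + n + 1) := by
      have := overlap A hconn (mem_of_range A hconn (show n < mA A hconn by omega))
        (by rw [show i0 A hconn + n + 1 = i0 A hconn + (n + 1) from by omega]
            exact mem_of_range A hconn hK)
      exact this
    have hle := lam_eq A hconn hK
    rw [show i0 A hconn + (n + 1) = i0 A hconn + n + 1 from by omega] at hle
    rw [Finset.sum_range_succ]
    rw [show i0 A hconn + (n + 1) = i0 A hconn + n + 1 from by omega]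
    rcases Nat.lt_trichotomy d n with h | h | h
    · rw [if_pos (by omega)]
      rw [if_pos h] at ihn
      omega
    · subst h
      rw [if_pos (by omega)]
      rw [if_neg (by omega)] at ihn
      omega
    · rw [if_neg (by omega)]
      rw [if_neg (by omega)] at ihn
      omega

include hconn in
lemma m_le_N : mA A hconn ≤ A.size := by
  rw [size_eq A hconn]
  calc mA A hconn = ∑ _k ∈ Finset.range (mA A hconn), 1 := by
        rw [Finset.sum_const, Finset.card_range, smul_eq_mul, mul_one]
    _ ≤ ∑ k ∈ Finset.range (mA A hconn), rA A hconn k :=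
        Finset.sum_le_sum fun k hk => hrA A hconn k (Finset.mem_range.mp hk)

include hconn in
lemma numCols_bound (hnotrib : ¬ A.Ribbon) : A.numCols + mA A hconn ≤ A.size := by
  obtain ⟨d, hd, hsp⟩ := special_exists A hconn hnotrib
  have hKlt : mA A hconn - 1 < mA A hconn := by unfold mA; omega
  have hkey := key_ineq A hconn hd hsp (mA A hconn - 1) hKlt
  rw [if_pos (by omega)] at hkey
  have hm1 : mA A hconn - 1 + 1 = mA A hconn := by unfold mA; omega
  rw [hm1, ← size_eq A hconn] at hkey
  have hiM : i0 A hconn + (mA A hconn - 1) = iM A hconn := by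
    have := i0_le_iM A hconn
    unfold mA
    omega
  rw [hiM] at hkey
  have hcols : A.numCols ≤ lamf A (i0 A hconn) - muf A (iM A hconn) := by
    have := Finset.card_le_card (colSet_subset A hconn)
    rw [Nat.card_Ico] at this
    exact this
  have hmm : muf A (iM A hconn) ≤ lamf A (i0 A hconn) := by
    have h1 : muf A (iM A hconn) ≤ muf A (i0 A hconn) := mu_anti A (i0_le_iM A hconn)
    have h2 := (mem_rowSet A).mp (Finset.min'_mem _ (rowSet_nonempty A hconn))
    unfold i0 at *
    omega
  unfold mA at *
  omega

lemma ones_le_numCols {S : SkewShape} {T : ℕ × ℕ → ℕ} (hT : S.IsSsyt T) :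
    (S.cells.filter fun c => T c = 1).card ≤ S.numCols := by
  apply Finset.card_le_card_of_injOn (fun c => c.2)
  · intro c hc
    exact Finset.mem_image_of_mem _ (Finset.mem_filter.mp hc).1
  · rintro ⟨a, b⟩ hc ⟨a', b'⟩ hc' heq
    rw [Finset.coe_filter, Set.mem_setOf_eq] at hc hc'
    dsimp only at heq
    subst heq
    rcases Nat.lt_trichotomy a a' with h | h | h
    · have := hT.2.2 a a' b hc.1 hc'.1 h
      omega
    · rw [h]
    · have := hT.2.2 a' a b hc'.1 hc.1 h
      omega

include hconn in
lemma lamstar_not_supp (hnotrib : ¬ A.Ribbon) :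
    (A.size - mA A hconn + 1) ::ₘ Multiset.replicate (mA A hconn - 1) 1 ∉ A.supp := by
  intro hmem
  obtain ⟨h0, T, hLR, hcont⟩ := hmem
  have hN := numCols_bound A hconn hnotrib
  have hmN := m_le_N A hconn
  have h1 := hcont 0
  rw [part_cons_replicate (by omega) 0, if_pos rfl] at h1
  have h2 : A.content T 1 ≤ A.numCols := ones_le_numCols hLR.1
  rw [show (0 : ℕ) + 1 = 1 from rfl] at h1
  unfold SkewShape.content at h1 h2
  omega

/-- The distinguished LR filling of the ribbon: `1` everywhere except at the
last cell of row `k` (for `k ≥ 1`), which gets the entry `k + 1`. -/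
def Tstar : ℕ × ℕ → ℕ :=
  fun p => if p.1 = 0 then 1 else if p.2 = tA A hconn (p.1 - 1) then p.1 + 1 else 1

include hconn in
lemma Tstar_pos (p : ℕ × ℕ) : 1 ≤ Tstar A hconn p := by
  unfold Tstar; split_ifs <;> omega

include hconn in
lemma X_mem {k : ℕ} (hk : k < mA A hconn) :
    ((k, tA A hconn (k - 1)) : ℕ × ℕ) ∈ (RB A hconn).cells := by
  rw [mem_RB]
  dsimp only
  rcases Nat.eq_zero_or_pos k with rfl | hk0
  · rw [show (0 : ℕ) - 1 = 0 from rfl]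
    have := hrA A hconn 0 hk
    exact ⟨hk, le_rfl, by omega⟩
  · have hsucc := tA_succ A hconn (show (k - 1) + 1 < mA A hconn by omega)
    rw [show k - 1 + 1 = k from by omega] at hsucc
    have := hrA A hconn k hk
    exact ⟨hk, by omega, by omega⟩

include hconn in
lemma Tstar_val_X {k : ℕ} :
    Tstar A hconn (k, tA A hconn (k - 1)) = if k = 0 then 1 else k + 1 := by
  unfold Tstar
  dsimp only
  rcases Nat.eq_zero_or_pos k with rfl | hk0
  · rw [if_pos rfl, if_pos rfl]
  · rw [if_neg (show ¬ k = 0 by omega), if_pos rfl, if_neg (show ¬ k = 0 by omega)]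

include hconn in
lemma Tstar_char {c : ℕ × ℕ} (hc : c ∈ (RB A hconn).cells) {v : ℕ} (hv : 2 ≤ v)
    (hval : Tstar A hconn c = v) :
    c = (v - 1, tA A hconn (v - 2)) ∧ v - 1 < mA A hconn ∧ 1 ≤ v - 1 := by
  obtain ⟨c1, c2⟩ := c
  unfold Tstar at hval
  dsimp only at hval
  rw [mem_RB] at hc
  dsimp only at hc
  by_cases h1 : c1 = 0
  · rw [if_pos h1] at hval; omega
  · rw [if_neg h1] at hval
    by_cases h2 : c2 = tA A hconn (c1 - 1)
    · rw [if_pos h2] at hval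
      have e1 : c1 = v - 1 := by omega
      refine ⟨?_, by omega, by omega⟩
      rw [Prod.mk.injEq]
      exact ⟨e1, by rw [h2]; congr 1; omega⟩
    · rw [if_neg h2] at hval; omega

include hconn in
lemma Tstar_ssyt : (RB A hconn).IsSsyt (Tstar A hconn) := by
  refine ⟨fun c _ => Tstar_pos A hconn c, ?_, ?_⟩
  · intro i j j' h1 h2 hjj
    by_cases hi : i = 0
    · subst hi
      unfold Tstar
      dsimp only
      rw [if_pos rfl, if_pos rfl]
    · rw [mem_RB] at h1 h2
      dsimp only at h1 h2
      have hup : tA A hconn i + rA A hconn i = tA A hconn (i - 1) + 1 := by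
        have hsucc := tA_succ A hconn (show (i - 1) + 1 < mA A hconn by omega)
        rw [show i - 1 + 1 = i from by omega] at hsucc
        have := hrA A hconn i h1.1
        omega
      unfold Tstar
      dsimp only
      rw [if_neg hi, if_neg hi]
      by_cases hj : j = tA A hconn (i - 1)
      · have he : j' = j := by omega
        rw [he]
      · rw [if_neg hj]
        split_ifs <;> omega
  · intro i i' j h1 h2 hii
    rw [mem_RB] at h1 h2
    dsimp only at h1 h2
    have hup : tA A hconn i' + rA A hconn i' = tA A hconn (i' - 1) + 1 := by
      have hsucc := tA_succ A hconn (show (i' - 1) + 1 < mA A hconn by omega)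
      rw [show i' - 1 + 1 = i' from by omega] at hsucc
      have := hrA A hconn i' h2.1
      omega
    have hta : tA A hconn (i' - 1) ≤ tA A hconn i := tA_anti A hconn (by omega)
    have hj : j = tA A hconn (i' - 1) := by omega
    unfold Tstar
    dsimp only
    rw [if_neg (show ¬ i' = 0 by omega), if_pos hj]
    split_ifs <;> omega

include hconn in
lemma Tstar_ballot : ∀ d ∈ (RB A hconn).cells, ∀ k : ℕ,
    ((RB A hconn).cells.filter fun c => Tstar A hconn c = k + 2 ∧ ReadsBefore c d).card ≤
    ((RB A hconn).cells.filter fun c => Tstar A hconn c = k + 1 ∧ ReadsBefore c d).card := by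
  intro d hd k
  by_cases hne : ((RB A hconn).cells.filter fun c =>
      Tstar A hconn c = k + 2 ∧ ReadsBefore c d).Nonempty
  · obtain ⟨c0, hc0⟩ := hne
    rw [Finset.mem_filter] at hc0
    obtain ⟨hc0m, hc0v, hc0r⟩ := hc0
    obtain ⟨hc0eq, hklt, hk1⟩ := Tstar_char A hconn hc0m (by omega) hc0v
    rw [show k + 2 - 1 = k + 1 from rfl] at hc0eq hklt
    rw [show k + 2 - 2 = k from rfl] at hc0eq
    have hcard : ((RB A hconn).cells.filter fun c =>
        Tstar A hconn c = k + 2 ∧ ReadsBefore c d).card ≤ 1 := by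
      rw [Finset.card_le_one]
      intro a ha b hb
      rw [Finset.mem_filter] at ha hb
      have e1 := Tstar_char A hconn ha.1 (by omega) ha.2.1
      have e2 := Tstar_char A hconn hb.1 (by omega) hb.2.1
      rw [e1.1, e2.1]
    have hrbw : ReadsBefore ((k, tA A hconn (k - 1)) : ℕ × ℕ) d := by
      rw [hc0eq] at hc0r
      unfold ReadsBefore at hc0r ⊢
      dsimp only at hc0r ⊢
      omega
    have hwit : ((k, tA A hconn (k - 1)) : ℕ × ℕ) ∈ (RB A hconn).cells.filter fun c =>
        Tstar A hconn c = k + 1 ∧ ReadsBefore c d := by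
      rw [Finset.mem_filter]
      refine ⟨X_mem A hconn (by omega), ?_, hrbw⟩
      rw [Tstar_val_X A hconn]
      split_ifs <;> omega
    have : 1 ≤ ((RB A hconn).cells.filter fun c =>
        Tstar A hconn c = k + 1 ∧ ReadsBefore c d).card := Finset.card_pos.mpr ⟨_, hwit⟩
    omega
  · rw [Finset.not_nonempty_iff_eq_empty] at hne
    rw [hne]
    simp

include hconn in
lemma RB_size : (RB A hconn).size = A.size := by
  show (RibbonConstr.Rsh _ _ _).size = _
  rw [RibbonConstr.Rsh_size, ← size_eq A hconn]

include hconn in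
lemma Tstar_content_high (j : ℕ) (hj : 1 ≤ j) :
    (RB A hconn).content (Tstar A hconn) (j + 1) = if j < mA A hconn then 1 else 0 := by
  unfold SkewShape.content
  rcases Nat.lt_or_ge j (mA A hconn) with h | h
  · rw [if_pos h]
    have he : ((RB A hconn).cells.filter fun c => Tstar A hconn c = j + 1)
        = {((j, tA A hconn (j - 1)) : ℕ × ℕ)} := by
      ext c
      rw [Finset.mem_filter, Finset.mem_singleton]
      constructor
      · rintro ⟨hcm, hcv⟩
        have hch := (Tstar_char A hconn hcm (by omega) hcv).1
        rw [hch]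
        rw [Prod.mk.injEq]
        exact ⟨rfl, by congr 1⟩
      · rintro rfl
        refine ⟨X_mem A hconn h, ?_⟩
        rw [Tstar_val_X A hconn, if_neg (by omega)]
    rw [he, Finset.card_singleton]
  · rw [if_neg (by omega)]
    rw [Finset.card_eq_zero, Finset.filter_eq_empty_iff]
    intro c hcm hcv
    have := (Tstar_char A hconn hcm (by omega) hcv).2.1
    omega

include hconn in
lemma Tstar_content_one :
    (RB A hconn).content (Tstar A hconn) 1 + (mA A hconn - 1) = A.size := by
  classical
  have hsplit := Finset.card_filter_add_card_filter_not
    (s := (RB A hconn).cells) (p := fun c => Tstar A hconn c = 1)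
  have hbig : ((RB A hconn).cells.filter fun c => ¬ Tstar A hconn c = 1) =
      (Finset.Ico 1 (mA A hconn)).map
        ⟨fun k => ((k, tA A hconn (k - 1)) : ℕ × ℕ), id (α := Function.Injective fun k =>
          ((k, tA A hconn (k - 1)) : ℕ × ℕ)) fun a b h => by
          exact congrArg Prod.fst h⟩ := by
    ext c
    rw [Finset.mem_filter, Finset.mem_map]
    constructor
    · rintro ⟨hcm, hcv⟩
      have hpos := Tstar_pos A hconn c
      obtain ⟨v, hv⟩ : ∃ v, Tstar A hconn c = v := ⟨_, rfl⟩
      have hch := Tstar_char A hconn hcm (show 2 ≤ v by omega) hv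
      refine ⟨v - 1, Finset.mem_Ico.mpr ⟨hch.2.2, hch.2.1⟩, ?_⟩
      rw [Function.Embedding.coeFn_mk, hch.1, Prod.mk.injEq]
      exact ⟨rfl, rfl⟩
    · rintro ⟨a, ha, rfl⟩
      rw [Finset.mem_Ico] at ha
      rw [Function.Embedding.coeFn_mk]
      refine ⟨X_mem A hconn ha.2, ?_⟩
      rw [Tstar_val_X A hconn, if_neg (by omega)]
      omega
  rw [hbig, Finset.card_map, Nat.card_Ico] at hsplit
  have hsz : (RB A hconn).cells.card = A.size := RB_size A hconn
  unfold SkewShape.content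
  omega

include hconn in
lemma lamstar_mem_supp :
    (A.size - mA A hconn + 1) ::ₘ Multiset.replicate (mA A hconn - 1) 1 ∈ (RB A hconn).supp := by
  have hmN := m_le_N A hconn
  have hm1 : 1 ≤ mA A hconn := by unfold mA; omega
  refine ⟨zero_notin_cons_replicate (by omega), Tstar A hconn,
    ⟨Tstar_ssyt A hconn, Tstar_ballot A hconn⟩, ?_⟩
  intro i
  rw [part_cons_replicate (by omega) i]
  rcases Nat.eq_zero_or_pos i with rfl | hi
  · rw [if_pos rfl]
    have hc1 := Tstar_content_one A hconn
    rw [show (0 : ℕ) + 1 = 1 from rfl]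
    omega
  · rw [if_neg (by omega), Tstar_content_high A hconn i hi]
    split_ifs <;> omega

end SkewProof
/-- If `A` is a connected skew shape with `N` boxes that is not a
ribbon, then there exists a ribbon `R` with `N` boxes such that `s_R − s_A` is
Schur-positive and `supp A` is strictly contained in `supp R`. -/
theorem exists_ribbon_above (N : ℕ) (A : SkewShape)
    (hconn : A.Connected) (hsize : A.size = N) (hnotrib : ¬ A.Ribbon) :
    ∃ R : SkewShape, R.Ribbon ∧ R.size = N ∧ R.SchurPosDiff A ∧ A.supp ⊂ R.supp := by
  refine ⟨SkewProof.RB A hconn, ?_, ?_, SkewProof.schurpos A hconn, ?_⟩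
  · exact RibbonConstr.Rsh_ribbon _ _ _ (by unfold SkewProof.mA; omega)
  · rw [← hsize]
    exact SkewProof.RB_size A hconn
  · rw [Set.ssubset_iff_of_subset (SkewProof.supp_subset A hconn)]
    exact ⟨_, SkewProof.lamstar_mem_supp A hconn, SkewProof.lamstar_not_supp A hconn hnotrib⟩
end

section
/- If R and R' are ribbons, each with N boxes, having different numbers of nonempty rows, then their supports are incomparable under containment: neither supp(R) ⊆ supp(R') nor supp(R') ⊆ supp(R). -/
namespace SkewShape

lemma mem_cells_iff (A : SkewShape) {i j : ℕ} :
    (i, j) ∈ A.cells ↔ A.inner.rowLen i ≤ j ∧ j < A.outer.rowLen i := by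
  simp only [cells, Finset.mem_sdiff, YoungDiagram.mem_cells,
    YoungDiagram.mem_iff_lt_rowLen, not_lt]
  tauto

lemma row_filter_eq (A : SkewShape) (i : ℕ) :
    (A.cells.filter fun c => c.1 = i) =
      (Finset.Ico (A.inner.rowLen i) (A.outer.rowLen i)).map
        ⟨fun j => (i, j), fun x y h => by simpa using h⟩ := by
  ext ⟨i', j⟩
  simp only [Finset.mem_filter, Finset.mem_map, Finset.mem_Ico, Function.Embedding.coeFn_mk]
  constructor
  · rintro ⟨hc, rfl⟩
    exact ⟨j, by simpa using (A.mem_cells_iff.mp hc), rfl⟩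
  · rintro ⟨j', hj', h⟩
    obtain ⟨rfl, rfl⟩ : i = i' ∧ j' = j := by
      have h' : (i, j') = (i', j) := h
      simpa [Prod.ext_iff] using h'
    exact ⟨A.mem_cells_iff.mpr hj', rfl⟩

lemma fst_mem_rowSet (A : SkewShape) {c : ℕ × ℕ} (h : c ∈ A.cells) : c.1 ∈ A.rowSet :=
  Finset.mem_image_of_mem _ h

lemma mem_rowSet_iff (A : SkewShape) {i : ℕ} :
    i ∈ A.rowSet ↔ A.inner.rowLen i < A.outer.rowLen i := by
  constructor
  · intro h
    obtain ⟨c, hc, rfl⟩ := Finset.mem_image.mp h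
    have := A.mem_cells_iff.mp (show (c.1, c.2) ∈ A.cells by rwa [Prod.mk.eta])
    omega
  · intro h
    exact Finset.mem_image.mpr ⟨(i, A.inner.rowLen i), A.mem_cells_iff.mpr ⟨le_refl _, h⟩, rfl⟩

lemma readsBefore_refl (d : ℕ × ℕ) : ReadsBefore d d := Or.inr ⟨rfl, le_refl _⟩

/-- In an LR filling, a box with entry `k+2` has a box with entry `k+1` strictly above. -/
lemma exists_above {A : SkewShape} {T : ℕ × ℕ → ℕ} (hLR : A.IsLR T) {d : ℕ × ℕ} {k : ℕ}
    (hd : d ∈ A.cells) (hTd : T d = k + 2) :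
    ∃ c ∈ A.cells, T c = k + 1 ∧ c.1 < d.1 := by
  have h := hLR.2 d hd k
  have hdmem : d ∈ A.cells.filter fun c => T c = k + 2 ∧ ReadsBefore c d :=
    Finset.mem_filter.mpr ⟨hd, hTd, readsBefore_refl d⟩
  have hpos : 0 < (A.cells.filter fun c => T c = k + 1 ∧ ReadsBefore c d).card :=
    lt_of_lt_of_le (Finset.card_pos.mpr ⟨d, hdmem⟩) h
  obtain ⟨c, hc⟩ := Finset.card_pos.mp hpos
  obtain ⟨hcmem, hTc, hrb⟩ := Finset.mem_filter.mp hc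
  refine ⟨c, hcmem, hTc, ?_⟩
  rcases hrb with h1 | ⟨h1, h2⟩
  · exact h1
  · exfalso
    have hc2 : (c.1, c.2) ∈ A.cells := by rwa [Prod.mk.eta]
    rw [h1] at hc2
    have hrow := hLR.1.2.1 d.1 d.2 c.2 (by rwa [Prod.mk.eta]) hc2 h2
    rw [Prod.mk.eta] at hrow
    have hT2 : T (c.1, c.2) = k + 1 := by rwa [Prod.mk.eta]
    rw [h1] at hT2
    omega

lemma rows_above {A : SkewShape} {T : ℕ × ℕ → ℕ} (hLR : A.IsLR T) :
    ∀ k : ℕ, ∀ d ∈ A.cells, T d = k + 1 →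
      k + 1 ≤ (A.rowSet.filter fun i => i ≤ d.1).card := by
  intro k
  induction k with
  | zero =>
    intro d hd _
    refine Finset.card_pos.mpr ⟨d.1, Finset.mem_filter.mpr ⟨A.fst_mem_rowSet hd, le_refl _⟩⟩
  | succ k ih =>
    intro d hd hTd
    obtain ⟨c, hc, hTc, hlt⟩ := exists_above hLR hd hTd
    have h1 := ih c hc hTc
    have hsub : (A.rowSet.filter fun i => i ≤ c.1) ⊆ (A.rowSet.filter fun i => i ≤ d.1) := by
      intro x hx
      obtain ⟨hx1, hx2⟩ := Finset.mem_filter.mp hx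
      exact Finset.mem_filter.mpr ⟨hx1, by omega⟩
    have hss := (Finset.ssubset_iff_of_subset hsub).mpr
      ⟨d.1, Finset.mem_filter.mpr ⟨A.fst_mem_rowSet hd, le_refl _⟩,
       fun hmem => by have := (Finset.mem_filter.mp hmem).2; omega⟩
    have := Finset.card_lt_card hss
    omega

lemma part_pos_of_lt_card {lam : Multiset ℕ} (h0 : 0 ∉ lam) {k : ℕ}
    (hk : k < Multiset.card lam) : 1 ≤ part lam k := by
  have hlen : (lam.sort (· ≥ ·)).length = Multiset.card lam := Multiset.length_sort _
  have hmem : (lam.sort (· ≥ ·)).getD k 0 ∈ lam := by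
    rw [List.getD_eq_getElem _ _ (by omega)]
    rw [← Multiset.mem_sort (· ≥ ·)]
    exact List.getElem_mem _
  have : part lam k ≠ 0 := fun h => h0 (h ▸ hmem)
  unfold part at *
  omega

/-- Claim (A): number of parts is at most number of rows. -/
lemma card_le_numRows (A : SkewShape) {lam : Multiset ℕ} (h : lam ∈ A.supp) :
    Multiset.card lam ≤ A.numRows := by
  obtain ⟨h0, T, hLR, hcont⟩ := h
  rcases Nat.eq_zero_or_pos (Multiset.card lam) with h | h
  · omega
  obtain ⟨k, hk⟩ : ∃ k, Multiset.card lam = k + 1 := ⟨Multiset.card lam - 1, by omega⟩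
  have hpos : 1 ≤ A.content T (k + 1) := by
    rw [hcont k]; exact part_pos_of_lt_card h0 (by omega)
  have : (A.cells.filter fun c => T c = k + 1).Nonempty := by
    rw [← Finset.card_pos]; exact hpos
  obtain ⟨d, hd⟩ := this
  obtain ⟨hdc, hTd⟩ := Finset.mem_filter.mp hd
  have := rows_above hLR k d hdc hTd
  have hle : (A.rowSet.filter fun i => i ≤ d.1).card ≤ A.rowSet.card :=
    Finset.card_filter_le _ _
  rw [hk]
  exact le_trans this hle

/-- Claim (B): largest part is at most number of columns. -/
lemma part_zero_le_numCols (A : SkewShape) {lam : Multiset ℕ} (h : lam ∈ A.supp) :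
    part lam 0 ≤ A.numCols := by
  obtain ⟨h0, T, hLR, hcont⟩ := h
  rw [← hcont 0]
  unfold content numCols
  apply Finset.card_le_card_of_injOn Prod.snd
  · intro c hc
    exact Finset.mem_image_of_mem _ (Finset.mem_filter.mp hc).1
  · intro c hc c' hc' hsnd
    obtain ⟨hcm, hTc⟩ := Finset.mem_filter.mp hc
    obtain ⟨hcm', hTc'⟩ := Finset.mem_filter.mp hc'
    by_contra hne
    have hfst : c.1 ≠ c'.1 := fun h => hne (Prod.ext h hsnd)
    rcases Nat.lt_or_ge c.1 c'.1 with hlt | hge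
    · have := hLR.1.2.2 c.1 c'.1 c.2 (by rwa [Prod.mk.eta])
        (by rw [hsnd, Prod.mk.eta]; exact hcm') hlt
      rw [Prod.mk.eta, hsnd, Prod.mk.eta] at this
      omega
    · have hlt : c'.1 < c.1 := by omega
      have := hLR.1.2.2 c'.1 c.1 c'.2 (by rwa [Prod.mk.eta])
        (by rw [← hsnd, Prod.mk.eta]; exact hcm) hlt
      rw [Prod.mk.eta, ← hsnd, Prod.mk.eta] at this
      omega

end SkewShape
namespace SkewShape

/-- Key connectivity step: if there are cells at row ≤ t and at row > t,
then rows t and t+1 overlap. -/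
lemma conn_overlap {R : SkewShape} (hconn : R.Connected) (t : ℕ)
    (h1 : ∃ p ∈ R.cells, p.1 ≤ t) (h2 : ∃ q ∈ R.cells, t < q.1) :
    R.inner.rowLen t < R.outer.rowLen (t + 1) := by
  by_contra hcon
  push_neg at hcon
  apply hconn.2
  refine ⟨R.cells.filter (fun c => c.1 ≤ t), R.cells.filter (fun c => ¬ c.1 ≤ t),
    ?_, ?_, Finset.filter_union_filter_not_eq _ _,
    Finset.disjoint_iff_inter_eq_empty.mp (Finset.disjoint_filter_filter_not _ _ _), ?_⟩
  · obtain ⟨p, hp, hpt⟩ := h1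
    exact ⟨p, Finset.mem_filter.mpr ⟨hp, hpt⟩⟩
  · obtain ⟨q, hq, hqt⟩ := h2
    exact ⟨q, Finset.mem_filter.mpr ⟨hq, by omega⟩⟩
  · intro p hp q hq
    obtain ⟨hpc, hpt⟩ := Finset.mem_filter.mp hp
    obtain ⟨hqc, hqt⟩ := Finset.mem_filter.mp hq
    have hp' := R.mem_cells_iff.mp (show (p.1, p.2) ∈ R.cells by rwa [Prod.mk.eta])
    have hq' := R.mem_cells_iff.mp (show (q.1, q.2) ∈ R.cells by rwa [Prod.mk.eta])
    have ha : R.inner.rowLen t ≤ R.inner.rowLen p.1 := R.inner.rowLen_anti _ _ hpt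
    have hb : R.outer.rowLen q.1 ≤ R.outer.rowLen (t + 1) := R.outer.rowLen_anti _ _ (by omega)
    constructor <;> omega

/-- rowSet of a connected shape is an interval. -/
lemma rowSet_interval {R : SkewShape} (hconn : R.Connected) {i i' i'' : ℕ}
    (h : i ∈ R.rowSet) (h' : i' ∈ R.rowSet) (h1 : i ≤ i'') (h2 : i'' ≤ i') :
    i'' ∈ R.rowSet := by
  by_contra hcon
  have hemp : R.outer.rowLen i'' ≤ R.inner.rowLen i'' := by
    by_contra hlt
    exact hcon (R.mem_rowSet_iff.mpr (by omega))
  have hne1 : i ≠ i'' := fun e => hcon (e ▸ h)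
  have hne2 : i'' ≠ i' := fun e => hcon (e ▸ h')
  have hii : i < i'' := by omega
  have hii' : i'' < i' := by omega
  obtain ⟨j, hj⟩ : ∃ j, (i, j) ∈ R.cells := by
    have := R.mem_rowSet_iff.mp h
    exact ⟨R.inner.rowLen i, R.mem_cells_iff.mpr ⟨le_refl _, this⟩⟩
  obtain ⟨j', hj'⟩ : ∃ j, (i', j) ∈ R.cells := by
    have := R.mem_rowSet_iff.mp h'
    exact ⟨R.inner.rowLen i', R.mem_cells_iff.mpr ⟨le_refl _, this⟩⟩
  have hov := conn_overlap hconn (i'' - 1) ⟨(i, j), hj, by simp; omega⟩ ⟨(i', j'), hj', by simp; omega⟩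
  have heq : i'' - 1 + 1 = i'' := by omega
  rw [heq] at hov
  have hanti := R.inner.rowLen_anti (i'' - 1) i'' (by omega)
  omega

/-- Adjacent rows of a ribbon overlap in exactly one column. -/
lemma ribbon_adj {R : SkewShape} (hR : R.Ribbon) {i : ℕ}
    (h : i ∈ R.rowSet) (h' : i + 1 ∈ R.rowSet) :
    R.outer.rowLen (i + 1) = R.inner.rowLen i + 1 := by
  have hover : R.inner.rowLen i < R.outer.rowLen (i + 1) := by
    apply conn_overlap hR.1 i
    · have := R.mem_rowSet_iff.mp h
      exact ⟨(i, R.inner.rowLen i), R.mem_cells_iff.mpr ⟨le_refl _, this⟩, le_refl _⟩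
    · have := R.mem_rowSet_iff.mp h'
      exact ⟨(i + 1, R.inner.rowLen (i + 1)), R.mem_cells_iff.mpr ⟨le_refl _, this⟩, by omega⟩
  by_contra hcon
  have h2 : R.inner.rowLen i + 1 < R.outer.rowLen (i + 1) := by omega
  apply hR.2 i (R.inner.rowLen i)
  have hanti1 : R.inner.rowLen (i + 1) ≤ R.inner.rowLen i := R.inner.rowLen_anti _ _ (by omega)
  have hanti2 : R.outer.rowLen (i + 1) ≤ R.outer.rowLen i := R.outer.rowLen_anti _ _ (by omega)
  refine ⟨R.mem_cells_iff.mpr ⟨le_refl _, by omega⟩,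
    R.mem_cells_iff.mpr ⟨by omega, by omega⟩,
    R.mem_cells_iff.mpr ⟨by omega, by omega⟩,
    R.mem_cells_iff.mpr ⟨by omega, by omega⟩⟩

end SkewShape
namespace SkewShape

lemma ribbon_rowSet_eq {R : SkewShape} (hR : R.Ribbon) :
    ∃ m, R.rowSet = Finset.Ico m (m + R.numRows) := by
  have hne : R.rowSet.Nonempty := by
    obtain ⟨c, hc⟩ := hR.1.1
    exact ⟨c.1, R.fst_mem_rowSet hc⟩
  set m := R.rowSet.min' hne with hm
  set M := R.rowSet.max' hne with hM
  have hmM : m ≤ M := R.rowSet.min'_le _ (R.rowSet.max'_mem hne)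
  have hIcc : R.rowSet = Finset.Icc m M := by
    apply Finset.Subset.antisymm
    · intro i hi
      exact Finset.mem_Icc.mpr ⟨R.rowSet.min'_le i hi, R.rowSet.le_max' i hi⟩
    · intro i hi
      obtain ⟨h1, h2⟩ := Finset.mem_Icc.mp hi
      exact rowSet_interval hR.1 (R.rowSet.min'_mem hne) (R.rowSet.max'_mem hne) h1 h2
  have hcard : R.numRows = M + 1 - m := by
    rw [numRows, hIcc, Nat.card_Icc]
  refine ⟨m, ?_⟩
  rw [hIcc, hcard, show m + (M + 1 - m) = M + 1 by omega, Finset.Ico_add_one_right_eq_Icc]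

lemma row_card {R : SkewShape} (i : ℕ) (h : R.inner.rowLen i ≤ R.outer.rowLen i) :
    R.inner.rowLen i + (R.cells.filter fun c => c.1 = i).card = R.outer.rowLen i := by
  rw [row_filter_eq]
  simp [Nat.card_Ico]
  omega

lemma mem_rowSet_iff' {R : SkewShape} {m : ℕ} (hm : R.rowSet = Finset.Ico m (m + R.numRows))
    {i : ℕ} : i ∈ R.rowSet ↔ m ≤ i ∧ i < m + R.numRows := by
  rw [hm, Finset.mem_Ico]

lemma ribbon_key_sum {R : SkewShape} (hR : R.Ribbon) {m : ℕ}
    (hm : R.rowSet = Finset.Ico m (m + R.numRows)) :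
    ∀ k, k < R.numRows →
      R.inner.rowLen (m + k) + (R.cells.filter fun c => c.1 ≤ m + k).card
        = R.outer.rowLen m + k := by
  intro k
  induction k with
  | zero =>
    intro hk
    have hmem : m ∈ R.rowSet := (mem_rowSet_iff' hm).mpr ⟨le_refl _, by omega⟩
    have hfe : (R.cells.filter fun c => c.1 ≤ m + 0) = (R.cells.filter fun c => c.1 = m) := by
      apply Finset.filter_congr
      intro c hc
      have := (mem_rowSet_iff' hm).mp (R.fst_mem_rowSet hc)
      omega
    rw [hfe]
    have := row_card (R := R) m (le_of_lt (R.mem_rowSet_iff.mp hmem))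
    simpa using this
  | succ k ih =>
    intro hk
    have ihv := ih (by omega)
    have hmem : m + k ∈ R.rowSet := (mem_rowSet_iff' hm).mpr ⟨by omega, by omega⟩
    have hmem' : m + k + 1 ∈ R.rowSet := (mem_rowSet_iff' hm).mpr ⟨by omega, by omega⟩
    have hadj : R.outer.rowLen (m + k + 1) = R.inner.rowLen (m + k) + 1 :=
      ribbon_adj hR hmem hmem'
    have hsplit : (R.cells.filter fun c => c.1 ≤ m + k + 1)
        = (R.cells.filter fun c => c.1 ≤ m + k) ∪ (R.cells.filter fun c => c.1 = m + k + 1) := by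
      rw [← Finset.filter_or]
      apply Finset.filter_congr
      intro c hc
      omega
    have hdisj : Disjoint (R.cells.filter fun c => c.1 ≤ m + k)
        (R.cells.filter fun c => c.1 = m + k + 1) := by
      rw [Finset.disjoint_left]
      intro c hc hc'
      have h1 := (Finset.mem_filter.mp hc).2
      have h2 := (Finset.mem_filter.mp hc').2
      omega
    have hrc := row_card (R := R) (m + k + 1) (le_of_lt (R.mem_rowSet_iff.mp hmem'))
    show R.inner.rowLen (m + k + 1) + (R.cells.filter fun c => c.1 ≤ m + k + 1).card
      = R.outer.rowLen m + (k + 1)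
    rw [hsplit, Finset.card_union_of_disjoint hdisj]
    omega

lemma ribbon_total {R : SkewShape} (hR : R.Ribbon) {m : ℕ}
    (hm : R.rowSet = Finset.Ico m (m + R.numRows)) :
    R.inner.rowLen (m + (R.numRows - 1)) + R.size + 1 = R.outer.rowLen m + R.numRows := by
  have hr1 : 1 ≤ R.numRows := by
    obtain ⟨c, hc⟩ := hR.1.1
    have := (mem_rowSet_iff' hm).mp (R.fst_mem_rowSet hc)
    omega
  have hks := ribbon_key_sum hR hm (R.numRows - 1) (by omega)
  have hall : (R.cells.filter fun c => c.1 ≤ m + (R.numRows - 1)) = R.cells := by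
    apply Finset.filter_true_of_mem
    intro c hc
    have := (mem_rowSet_iff' hm).mp (R.fst_mem_rowSet hc)
    omega
  rw [hall] at hks
  rw [size]
  omega

lemma ribbon_colSet {R : SkewShape} (hR : R.Ribbon) {m : ℕ}
    (hm : R.rowSet = Finset.Ico m (m + R.numRows)) :
    R.colSet = Finset.Ico (R.inner.rowLen (m + (R.numRows - 1))) (R.outer.rowLen m) := by
  apply Finset.Subset.antisymm
  · intro j hj
    obtain ⟨c, hc, rfl⟩ := Finset.mem_image.mp hj
    have hcc := R.mem_cells_iff.mp (show (c.1, c.2) ∈ R.cells by rwa [Prod.mk.eta])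
    have hrow := (mem_rowSet_iff' hm).mp (R.fst_mem_rowSet hc)
    have h1 : R.inner.rowLen (m + (R.numRows - 1)) ≤ R.inner.rowLen c.1 :=
      R.inner.rowLen_anti _ _ (by omega)
    have h2 : R.outer.rowLen c.1 ≤ R.outer.rowLen m := R.outer.rowLen_anti _ _ (by omega)
    rw [Finset.mem_Ico]
    omega
  · -- cover: downward induction via auxiliary claim
    have hr1 : 1 ≤ R.numRows := by
      obtain ⟨c, hc⟩ := hR.1.1
      have := (mem_rowSet_iff' hm).mp (R.fst_mem_rowSet hc)
      omega
    have claim : ∀ k, k < R.numRows → ∀ j, R.inner.rowLen (m + k) ≤ j →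
        j < R.outer.rowLen m → j ∈ R.colSet := by
      intro k
      induction k with
      | zero =>
        intro _ j hj1 hj2
        exact Finset.mem_image.mpr ⟨(m, j), R.mem_cells_iff.mpr ⟨by simpa using hj1, by simpa using hj2⟩, rfl⟩
      | succ k ih =>
        intro hk j hj1 hj2
        rcases Nat.lt_or_ge j (R.inner.rowLen (m + k)) with hlt | hge
        · have hmem : m + k ∈ R.rowSet := (mem_rowSet_iff' hm).mpr ⟨by omega, by omega⟩
          have hmem' : m + (k + 1) ∈ R.rowSet := (mem_rowSet_iff' hm).mpr ⟨by omega, by omega⟩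
          have hadj : R.outer.rowLen (m + k + 1) = R.inner.rowLen (m + k) + 1 :=
            ribbon_adj hR hmem (by rw [show m + k + 1 = m + (k + 1) by omega]; exact hmem')
          refine Finset.mem_image.mpr ⟨(m + (k + 1), j), R.mem_cells_iff.mpr ⟨hj1, ?_⟩, rfl⟩
          rw [show m + (k + 1) = m + k + 1 by omega, hadj]
          omega
        · exact ih (by omega) j hge hj2
    intro j hj
    rw [Finset.mem_Ico] at hj
    exact claim (R.numRows - 1) (by omega) j hj.1 hj.2

lemma ribbon_numCols {R : SkewShape} (hR : R.Ribbon) :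
    R.numCols + R.numRows = R.size + 1 := by
  obtain ⟨m, hm⟩ := ribbon_rowSet_eq hR
  have htot := ribbon_total hR hm
  have hcs := ribbon_colSet hR hm
  have hr1 : 1 ≤ R.numRows := by
    obtain ⟨c, hc⟩ := hR.1.1
    have := (mem_rowSet_iff' hm).mp (R.fst_mem_rowSet hc)
    omega
  have hrs : R.numRows ≤ R.size := Finset.card_image_le
  have hle : R.inner.rowLen (m + (R.numRows - 1)) ≤ R.outer.rowLen m := by omega
  have : R.numCols = R.outer.rowLen m - R.inner.rowLen (m + (R.numRows - 1)) := by
    rw [numCols, hcs, Nat.card_Ico]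
  omega

end SkewShape
namespace SkewShape

/-- The hook filling of a ribbon: the rightmost box of row `m+k` gets entry
`k+1`, all other boxes get entry `1`. -/
def ribbonFill (R : SkewShape) (m : ℕ) : ℕ × ℕ → ℕ := fun c =>
  if c ∈ R.cells then (if c.2 + 1 = R.outer.rowLen c.1 then c.1 + 1 - m else 1) else 0

lemma ribbonFill_rightmost {R : SkewShape} {m : ℕ} {c : ℕ × ℕ} (h : c ∈ R.cells)
    (hr : c.2 + 1 = R.outer.rowLen c.1) : ribbonFill R m c = c.1 + 1 - m := by
  simp [ribbonFill, h, hr]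

lemma ribbonFill_one {R : SkewShape} {m : ℕ} {c : ℕ × ℕ} (h : c ∈ R.cells)
    (hr : c.2 + 1 ≠ R.outer.rowLen c.1) : ribbonFill R m c = 1 := by
  simp [ribbonFill, h, hr]

lemma cell_row_ge {R : SkewShape} {m : ℕ} (hm : R.rowSet = Finset.Ico m (m + R.numRows))
    {c : ℕ × ℕ} (h : c ∈ R.cells) : m ≤ c.1 ∧ c.1 < m + R.numRows :=
  (mem_rowSet_iff' hm).mp (R.fst_mem_rowSet h)

lemma ribbonFill_pos {R : SkewShape} {m : ℕ} (hm : R.rowSet = Finset.Ico m (m + R.numRows))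
    {c : ℕ × ℕ} (h : c ∈ R.cells) : 1 ≤ ribbonFill R m c := by
  have := (cell_row_ge hm h).1
  by_cases hr : c.2 + 1 = R.outer.rowLen c.1
  · rw [ribbonFill_rightmost h hr]; omega
  · rw [ribbonFill_one h hr]

lemma ribbonFill_le {R : SkewShape} {m : ℕ} (hm : R.rowSet = Finset.Ico m (m + R.numRows))
    {c : ℕ × ℕ} (h : c ∈ R.cells) : ribbonFill R m c ≤ c.1 + 1 - m := by
  have := (cell_row_ge hm h).1
  by_cases hr : c.2 + 1 = R.outer.rowLen c.1
  · rw [ribbonFill_rightmost h hr]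
  · rw [ribbonFill_one h hr]; omega

/-- In a ribbon, a box with another box strictly above it in the same column
is the rightmost box of its row. -/
lemma ribbon_col_rightmost {R : SkewShape} (hR : R.Ribbon) {i i' j : ℕ}
    (h : (i, j) ∈ R.cells) (h' : (i', j) ∈ R.cells) (hlt : i < i') :
    j + 1 = R.outer.rowLen i' := by
  have h1 := R.mem_cells_iff.mp h
  have h2 := R.mem_cells_iff.mp h'
  have hi : i ∈ R.rowSet := R.fst_mem_rowSet h
  have hi' : i' ∈ R.rowSet := R.fst_mem_rowSet h'
  have hprev : i' - 1 ∈ R.rowSet := rowSet_interval hR.1 hi hi' (by omega) (by omega)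
  have hadj : R.outer.rowLen (i' - 1 + 1) = R.inner.rowLen (i' - 1) + 1 :=
    ribbon_adj hR hprev (by rw [show i' - 1 + 1 = i' by omega]; exact hi')
  rw [show i' - 1 + 1 = i' by omega] at hadj
  have hanti : R.inner.rowLen (i' - 1) ≤ R.inner.rowLen i := R.inner.rowLen_anti _ _ (by omega)
  omega

lemma ribbonFill_isSsyt {R : SkewShape} (hR : R.Ribbon) {m : ℕ}
    (hm : R.rowSet = Finset.Ico m (m + R.numRows)) : R.IsSsyt (ribbonFill R m) := by
  refine ⟨fun c hc => ribbonFill_pos hm hc, ?_, ?_⟩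
  · intro i j j' hj hj' hle
    rcases Nat.eq_or_lt_of_le hle with rfl | hlt
    · exact le_refl _
    · have hcell := R.mem_cells_iff.mp hj'
      have hne : (i, j).2 + 1 ≠ R.outer.rowLen (i, j).1 := by simp; omega
      rw [ribbonFill_one hj hne]
      exact ribbonFill_pos hm hj'
  · intro i i' j hij hij' hlt
    have hr : (i', j).2 + 1 = R.outer.rowLen (i', j).1 := ribbon_col_rightmost hR hij hij' hlt
    rw [ribbonFill_rightmost hij' hr]
    have h1 := (cell_row_ge hm hij).1
    have h2 := ribbonFill_le hm hij
    simp only at h1 h2 ⊢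
    omega

/-- Characterization of boxes with entry ≥ 2. -/
lemma ribbonFill_ge_two {R : SkewShape} {m : ℕ}
    (hm : R.rowSet = Finset.Ico m (m + R.numRows)) {c : ℕ × ℕ} (h : c ∈ R.cells)
    (h2 : 2 ≤ ribbonFill R m c) :
    c.2 + 1 = R.outer.rowLen c.1 ∧ m + ribbonFill R m c = c.1 + 1 := by
  have hge := (cell_row_ge hm h).1
  by_cases hr : c.2 + 1 = R.outer.rowLen c.1
  · rw [ribbonFill_rightmost h hr] at *
    exact ⟨hr, by omega⟩
  · rw [ribbonFill_one h hr] at h2; omega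

/-- The box with entry `k+1` (for `k ≥ 1`), explicitly. -/
lemma ribbonFill_box {R : SkewShape} {m : ℕ}
    (hm : R.rowSet = Finset.Ico m (m + R.numRows)) {k : ℕ} (hk : k < R.numRows) :
    (m + k, R.outer.rowLen (m + k) - 1) ∈ R.cells ∧
      ribbonFill R m (m + k, R.outer.rowLen (m + k) - 1) = k + 1 := by
  have hmem : m + k ∈ R.rowSet := (mem_rowSet_iff' hm).mpr ⟨by omega, by omega⟩
  have hne := R.mem_rowSet_iff.mp hmem
  have hcell : (m + k, R.outer.rowLen (m + k) - 1) ∈ R.cells :=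
    R.mem_cells_iff.mpr ⟨by omega, by omega⟩
  refine ⟨hcell, ?_⟩
  rw [ribbonFill_rightmost hcell (by simp; omega)]
  simp
  omega

lemma ribbonFill_isLR {R : SkewShape} (hR : R.Ribbon) {m : ℕ}
    (hm : R.rowSet = Finset.Ico m (m + R.numRows)) : R.IsLR (ribbonFill R m) := by
  refine ⟨ribbonFill_isSsyt hR hm, ?_⟩
  intro d hd k
  rcases Finset.eq_empty_or_nonempty
    (R.cells.filter fun c => ribbonFill R m c = k + 2 ∧ ReadsBefore c d) with hemp | ⟨c0, hc0⟩
  · rw [hemp]; simp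
  obtain ⟨hc0c, hc0T, hc0rb⟩ := Finset.mem_filter.mp hc0
  -- the entry-(k+2) box is unique
  have huniq : ∀ c ∈ R.cells, ribbonFill R m c = k + 2 → c = c0 := by
    intro c hc hcT
    have h1 := ribbonFill_ge_two hm hc (by omega)
    have h2 := ribbonFill_ge_two hm hc0c (by omega)
    rw [hcT] at h1
    rw [hc0T] at h2
    have : c.1 = c0.1 := by omega
    have hsnd : c.2 = c0.2 := by
      have e1 := h1.1; have e2 := h2.1
      rw [this] at e1
      omega
    exact Prod.ext this hsnd
  have hcard1 : (R.cells.filter fun c => ribbonFill R m c = k + 2 ∧ ReadsBefore c d).card ≤ 1 := by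
    apply Finset.card_le_one.mpr
    intro x hx y hy
    obtain ⟨hx1, hx2, _⟩ := Finset.mem_filter.mp hx
    obtain ⟨hy1, hy2, _⟩ := Finset.mem_filter.mp hy
    rw [huniq x hx1 hx2, huniq y hy1 hy2]
  -- the entry-(k+1) box exists and reads before d
  have hc0ge := ribbonFill_ge_two hm hc0c (by omega)
  rw [hc0T] at hc0ge
  have hkr : k + 1 < R.numRows := by
    have := (cell_row_ge hm hc0c).2
    omega
  obtain ⟨he1c, he1T⟩ := ribbonFill_box hm (k := k) (by omega)
  have hd1 : m + k < d.1 := by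
    rcases hc0rb with h | ⟨h, _⟩ <;> omega
  have he1mem : (m + k, R.outer.rowLen (m + k) - 1) ∈
      R.cells.filter fun c => ribbonFill R m c = k + 1 ∧ ReadsBefore c d :=
    Finset.mem_filter.mpr ⟨he1c, he1T, Or.inl (by simpa using hd1)⟩
  have : 1 ≤ (R.cells.filter fun c => ribbonFill R m c = k + 1 ∧ ReadsBefore c d).card :=
    Finset.card_pos.mpr ⟨_, he1mem⟩
  omega

end SkewShape
namespace SkewShape

lemma ribbonFill_content_high {R : SkewShape} {m : ℕ}
    (hm : R.rowSet = Finset.Ico m (m + R.numRows)) {k : ℕ} (hk : R.numRows ≤ k) :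
    R.content (ribbonFill R m) (k + 1) = 0 := by
  rw [content, Finset.card_eq_zero, Finset.filter_eq_empty_iff]
  intro c hc
  have h1 := (cell_row_ge hm hc).2
  have h2 := ribbonFill_le hm hc
  omega

lemma ribbonFill_content_mid {R : SkewShape} {m : ℕ}
    (hm : R.rowSet = Finset.Ico m (m + R.numRows)) {k : ℕ} (hk1 : 1 ≤ k)
    (hk2 : k < R.numRows) :
    R.content (ribbonFill R m) (k + 1) = 1 := by
  rw [content]
  obtain ⟨hbc, hbT⟩ := ribbonFill_box hm hk2
  rw [Finset.card_eq_one]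
  refine ⟨(m + k, R.outer.rowLen (m + k) - 1), ?_⟩
  ext c
  simp only [Finset.mem_filter, Finset.mem_singleton]
  constructor
  · rintro ⟨hc, hcT⟩
    have hge := ribbonFill_ge_two hm hc (by omega)
    rw [hcT] at hge
    have h1 : c.1 = m + k := by omega
    have h2 : c.2 = R.outer.rowLen (m + k) - 1 := by
      have := hge.1
      rw [h1] at this
      omega
    exact Prod.ext h1 h2
  · rintro rfl
    exact ⟨hbc, hbT⟩

lemma ribbonFill_high_card {R : SkewShape} {m : ℕ}
    (hm : R.rowSet = Finset.Ico m (m + R.numRows)) :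
    (R.cells.filter fun c => 2 ≤ ribbonFill R m c).card = R.numRows - 1 := by
  have hset : (R.cells.filter fun c => 2 ≤ ribbonFill R m c)
      = (Finset.Ico (m + 1) (m + R.numRows)).map
        ⟨fun i => (i, R.outer.rowLen i - 1), fun x y h => by simpa using congrArg Prod.fst h⟩ := by
    ext c
    simp only [Finset.mem_filter, Finset.mem_map, Finset.mem_Ico, Function.Embedding.coeFn_mk]
    constructor
    · rintro ⟨hc, hT⟩
      have hge := ribbonFill_ge_two hm hc hT
      have hrow := cell_row_ge hm hc
      refine ⟨c.1, ⟨by omega, hrow.2⟩, ?_⟩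
      have : c.2 = R.outer.rowLen c.1 - 1 := by omega
      show (c.1, R.outer.rowLen c.1 - 1) = c
      rw [← this, Prod.mk.eta]
    · rintro ⟨i, ⟨hi1, hi2⟩, rfl⟩
      have hk : i - m < R.numRows := by omega
      obtain ⟨hbc, hbT⟩ := ribbonFill_box hm hk
      rw [show m + (i - m) = i by omega] at hbc hbT
      exact ⟨hbc, by show 2 ≤ ribbonFill R m (i, R.outer.rowLen i - 1); omega⟩
  rw [hset, Finset.card_map, Nat.card_Ico]
  omega

lemma ribbonFill_content_one {R : SkewShape} {m : ℕ}
    (hm : R.rowSet = Finset.Ico m (m + R.numRows)) :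
    R.content (ribbonFill R m) 1 + (R.numRows - 1) = R.size := by
  have hsplit := Finset.card_filter_add_card_filter_not
    (s := R.cells) (p := fun c => 2 ≤ ribbonFill R m c)
  have hone : (R.cells.filter fun c => ¬ 2 ≤ ribbonFill R m c)
      = (R.cells.filter fun c => ribbonFill R m c = 1) := by
    apply Finset.filter_congr
    intro c hc
    have := ribbonFill_pos hm hc
    omega
  rw [hone] at hsplit
  rw [content, ← ribbonFill_high_card hm]
  rw [size]
  omega

end SkewShape
namespace SkewShape

/-- The hook partition with arm `a ≥ 1` and `l` extra parts equal to 1. -/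
def hookPart (a l : ℕ) : Multiset ℕ := a ::ₘ Multiset.replicate l 1

lemma sorted_replicate_one (l : ℕ) : List.Pairwise (· ≥ ·) (List.replicate l (1 : ℕ)) := by
  induction l with
  | zero => simp
  | succ l ih =>
    rw [List.replicate_succ, List.pairwise_cons]
    refine ⟨fun b hb => ?_, ih⟩
    rw [List.eq_of_mem_replicate hb]

lemma hookPart_sort {a l : ℕ} (ha : 1 ≤ a) :
    (hookPart a l).sort (· ≥ ·) = a :: List.replicate l 1 := by
  have hs2 : List.Pairwise (· ≥ ·) (a :: List.replicate l 1) := by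
    rw [List.pairwise_cons]
    refine ⟨fun b hb => ?_, sorted_replicate_one l⟩
    rw [List.eq_of_mem_replicate hb]
    omega
  have hperm : ((hookPart a l).sort (· ≥ ·)).Perm (a :: List.replicate l 1) := by
    rw [← Multiset.coe_eq_coe, Multiset.sort_eq]
    rw [hookPart]
    rw [show ((a :: List.replicate l 1 : List ℕ) : Multiset ℕ)
      = a ::ₘ (List.replicate l 1 : List ℕ) from rfl]
    rw [Multiset.coe_replicate]
  exact List.Perm.eq_of_pairwise' (Multiset.pairwise_sort _ _) hs2 hperm

lemma hookPart_part_zero {a l : ℕ} (ha : 1 ≤ a) : part (hookPart a l) 0 = a := by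
  rw [part, hookPart_sort ha]
  rfl

lemma hookPart_part_mid {a l : ℕ} (ha : 1 ≤ a) {i : ℕ} (h1 : 1 ≤ i) (h2 : i ≤ l) :
    part (hookPart a l) i = 1 := by
  rw [part, hookPart_sort ha]
  rcases Nat.exists_eq_add_of_le h1 with ⟨i', rfl⟩
  rw [show 1 + i' = i' + 1 by omega]
  rw [List.getD_cons_succ]
  rw [List.getD_eq_getElem _ _ (by simp; omega)]
  simp

lemma hookPart_part_high {a l : ℕ} (ha : 1 ≤ a) {i : ℕ} (h : l < i) :
    part (hookPart a l) i = 0 := by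
  rw [part, hookPart_sort ha]
  apply List.getD_eq_default
  simp
  omega

lemma hookPart_card (a l : ℕ) : Multiset.card (hookPart a l) = l + 1 := by
  rw [hookPart]
  simp

lemma hookPart_zero_not_mem {a l : ℕ} (ha : 1 ≤ a) : 0 ∉ hookPart a l := by
  rw [hookPart]
  simp only [Multiset.mem_cons, Multiset.mem_replicate]
  omega

lemma numRows_le_size (R : SkewShape) : R.numRows ≤ R.size := Finset.card_image_le

lemma numRows_pos {R : SkewShape} (hR : R.Ribbon) : 1 ≤ R.numRows := by
  obtain ⟨c, hc⟩ := hR.1.1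
  exact Finset.card_pos.mpr ⟨c.1, R.fst_mem_rowSet hc⟩

/-- The hook partition of a ribbon is in its support. -/
lemma ribbon_hook_mem_supp {R : SkewShape} (hR : R.Ribbon) :
    hookPart (R.size + 1 - R.numRows) (R.numRows - 1) ∈ R.supp := by
  obtain ⟨m, hm⟩ := ribbon_rowSet_eq hR
  have hr1 := numRows_pos hR
  have hrs := numRows_le_size R
  have ha : 1 ≤ R.size + 1 - R.numRows := by omega
  refine ⟨hookPart_zero_not_mem ha, ribbonFill R m, ribbonFill_isLR hR hm, ?_⟩
  intro i
  rcases Nat.eq_zero_or_pos i with rfl | hi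
  · show R.content (ribbonFill R m) 1 = _
    rw [hookPart_part_zero ha]
    have := ribbonFill_content_one hm
    omega
  rcases Nat.lt_or_ge i R.numRows with hlt | hge
  · rw [hookPart_part_mid ha hi (by omega)]
    exact ribbonFill_content_mid hm hi hlt
  · rw [hookPart_part_high ha (by omega)]
    exact ribbonFill_content_high hm hge

end SkewShape
namespace SkewShape

lemma ribbon_not_supp_subset {R R' : SkewShape} (hR : R.Ribbon) (hR' : R'.Ribbon)
    (hsz : R.size = R'.size) (hlt : R.numRows < R'.numRows) :
    ¬ R.supp ⊆ R'.supp ∧ ¬ R'.supp ⊆ R.supp := by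
  have hr1 := numRows_pos hR
  have hr1' := numRows_pos hR'
  have hrs := numRows_le_size R
  have hrs' := numRows_le_size R'
  constructor
  · intro hsub
    have hmem' := hsub (ribbon_hook_mem_supp hR)
    have hle := part_zero_le_numCols R' hmem'
    rw [hookPart_part_zero (by omega)] at hle
    have h1 := ribbon_numCols hR'
    omega
  · intro hsub
    have hmem' := hsub (ribbon_hook_mem_supp hR')
    have hle := card_le_numRows R hmem'
    rw [hookPart_card] at hle
    omega

end SkewShape
/-- If `R` and `R'` are ribbons, each with `N` boxes, having
different numbers of nonempty rows, then their supports are incomparable under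
containment. -/
theorem ribbons_diff_rows_supp_incomparable (N : ℕ) (R R' : SkewShape)
    (hR : R.Ribbon) (hR' : R'.Ribbon) (hs : R.size = N) (hs' : R'.size = N)
    (hrows : R.numRows ≠ R'.numRows) :
    ¬ R.supp ⊆ R'.supp ∧ ¬ R'.supp ⊆ R.supp := by
  have hsz : R.size = R'.size := hs.trans hs'.symm
  rcases Nat.lt_or_ge R.numRows R'.numRows with h | h
  · exact SkewShape.ribbon_not_supp_subset hR hR' hsz h
  · have h' : R'.numRows < R.numRows := by omega
    exact (SkewShape.ribbon_not_supp_subset hR' hR hsz.symm h').symm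
end
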